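/- arXiv:0904.4657 — 7 statements merged into one kernel-verified Lean document; each statement's English description precedes it below -/
import Mathlib

section
/- Let X and X' be locally finite trees in which every vertex has degree at least 2, with graph distances d and d', and fix vertices x₀ of X and x'₀ of X'. Let Γ₀ be a group acting on X by graph automorphisms, freely and without inversions, with finitely many vertex orbits. Let ρ : Γ₀ → Aut(X') be a group homomorphism, and define C_ρ as the infimum of the set of reals t ≥ 0 for which there exists t' ≥ 0 with d'(x'₀, ρ(γ)·x'₀) ≤ t·d(x₀, γ·x₀) + t' for all γ ∈ Γ₀. Then ρ is admissible if and only if C_ρ < 1. -/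
open SimpleGraph

private lemma aux_iso_dist_le {V V' : Type*} {G : SimpleGraph V} {G' : SimpleGraph V'}
    (e : G ≃g G') (u v : V) : G'.dist (e u) (e v) ≤ G.dist u v := by
  by_cases h : G.Reachable u v
  · obtain ⟨p, hp⟩ := h.exists_walk_length_eq_dist
    calc G'.dist (e u) (e v) ≤ (p.map e.toHom).length := SimpleGraph.dist_le _
      _ = G.dist u v := by rw [SimpleGraph.Walk.length_map, hp]
  · have h2 : ¬ G'.Reachable (e u) (e v) := fun h' =>
      h (h'.elim fun p =>
        ⟨(p.map e.symm.toHom).copy (e.symm_apply_apply u) (e.symm_apply_apply v)⟩)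
    rw [SimpleGraph.dist_eq_zero_of_not_reachable h,
      SimpleGraph.dist_eq_zero_of_not_reachable h2]

private lemma aux_iso_dist {V V' : Type*} {G : SimpleGraph V} {G' : SimpleGraph V'}
    (e : G ≃g G') (u v : V) : G'.dist (e u) (e v) = G.dist u v := by
  refine le_antisymm (aux_iso_dist_le e u v) ?_
  have := aux_iso_dist_le e.symm (e u) (e v)
  simpa using this

private lemma aux_exists_adj_dist {V : Type*} {G : SimpleGraph V} (hconn : G.Connected)
    {u v : V} (h : 0 < G.dist u v) :
    ∃ w, G.Adj u w ∧ G.dist w v + 1 = G.dist u v := by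
  obtain ⟨p, hp⟩ := (hconn u v).exists_walk_length_eq_dist
  cases p with
  | nil => rw [SimpleGraph.dist_self] at h; omega
  | cons ha q =>
    rename_i w
    refine ⟨w, ha, ?_⟩
    have h1 : G.dist w v ≤ q.length := SimpleGraph.dist_le q
    have h2 : G.dist u v ≤ G.dist u w + G.dist w v := hconn.dist_triangle
    have h3 : G.dist u w = 1 := SimpleGraph.dist_eq_one_iff_adj.mpr ha
    simp only [SimpleGraph.Walk.length_cons] at hp
    omega

private lemma aux_ball_finite {V : Type*} {G : SimpleGraph V} [∀ v, Fintype (G.neighborSet v)]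
    (hconn : G.Connected) (x₀ : V) (n : ℕ) : {v : V | G.dist x₀ v ≤ n}.Finite := by
  induction n with
  | zero =>
    apply Set.Finite.subset (Set.finite_singleton x₀)
    intro v hv
    simp only [Set.mem_setOf_eq, Nat.le_zero] at hv
    have := hconn.dist_eq_zero_iff.mp hv
    simp [← this]
  | succ n ih =>
    apply Set.Finite.subset (ih.union (ih.biUnion fun u _ => (G.neighborSet u).toFinite))
    intro v hv
    simp only [Set.mem_setOf_eq] at hv
    by_cases hle : G.dist x₀ v ≤ n
    · exact Or.inl hle
    · have hpos : 0 < G.dist v x₀ := by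
        rw [SimpleGraph.dist_comm]; omega
      obtain ⟨w, hw, hdw⟩ := aux_exists_adj_dist hconn hpos
      have hwmem : w ∈ {v : V | G.dist x₀ v ≤ n} := by
        simp only [Set.mem_setOf_eq]
        have hvc : G.dist v x₀ = G.dist x₀ v := SimpleGraph.dist_comm
        have hwc : G.dist w x₀ = G.dist x₀ w := SimpleGraph.dist_comm
        omega
      exact Or.inr (Set.mem_biUnion hwmem hw.symm)

private lemma aux_exists_dist_split {V : Type*} {G : SimpleGraph V} (hconn : G.Connected)
    (u v : V) (L : ℕ) (hL : L ≤ G.dist u v) :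
    ∃ z, G.dist u z = L ∧ G.dist z v + L = G.dist u v := by
  revert hL
  induction L with
  | zero => intro _; exact ⟨u, by simp, by simp⟩
  | succ L ih =>
    intro hL
    obtain ⟨z, hz1, hz2⟩ := ih (by omega)
    have h0 : 0 < G.dist z v := by omega
    obtain ⟨w, hw, hdw⟩ := aux_exists_adj_dist hconn h0
    have h1 : G.dist u w ≤ L + 1 := by
      have ht := hconn.dist_triangle (u := u) (v := z) (w := w)
      have hzw : G.dist z w = 1 := SimpleGraph.dist_eq_one_iff_adj.mpr hw
      omega
    have h2 := hconn.dist_triangle (u := u) (v := w) (w := v)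
    exact ⟨w, by omega, by omega⟩

/-- **Théorčme 5.1, point (2)** (unit edge-length case): for a group `Γ` acting freely
and without inversions on a locally finite tree `X` of minimal degree `≥ 2` with finitely
many vertex orbits, and a homomorphism `ρ : Γ → Aut(X')` to the automorphism group of
another such tree, `ρ` is admissible (i.e. for every `R > 0` one has
`d'(x'₀, ρ(γ)·x'₀) ≤ d(x₀, γ·x₀) − R` for all but finitely many `γ`)
if and only if `C_ρ < 1`. -/
theorem stmt_1 {V V' : Type*} (G : SimpleGraph V) (G' : SimpleGraph V')
    [∀ v, Fintype (G.neighborSet v)] [∀ v, Fintype (G'.neighborSet v)]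
    (hG : G.IsTree) (hG' : G'.IsTree)
    (hdeg : ∀ v : V, 2 ≤ G.degree v) (hdeg' : ∀ v : V', 2 ≤ G'.degree v)
    (x₀ : V) (x₀' : V')
    {Γ : Type*} [Group Γ] [MulAction Γ V]
    (hact : ∀ (γ : Γ) (u v : V), G.Adj u v → G.Adj (γ • u) (γ • v))
    (hfree : ∀ γ : Γ, γ ≠ 1 → ∀ v : V, γ • v ≠ v)
    (hninv : ∀ γ : Γ, γ ≠ 1 → ∀ u v : V, G.Adj u v → ¬(γ • u = v ∧ γ • v = u))
    [Finite (Quotient (MulAction.orbitRel Γ V))]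
    (ρ : Γ →* (G' ≃g G')) :
    let Cρ : ℝ := sInf {t : ℝ | 0 ≤ t ∧ ∃ t' : ℝ, 0 ≤ t' ∧ ∀ γ : Γ,
      (G'.dist x₀' (ρ γ x₀') : ℝ) ≤ t * (G.dist x₀ (γ • x₀) : ℝ) + t'}
    (∀ R : ℝ, 0 < R →
        {γ : Γ | ¬ ((G'.dist x₀' (ρ γ x₀') : ℝ) ≤ (G.dist x₀ (γ • x₀) : ℝ) - R)}.Finite)
      ↔ Cρ < 1 := by
  intro Cρ
  set S : Set ℝ := {t : ℝ | 0 ≤ t ∧ ∃ t' : ℝ, 0 ≤ t' ∧ ∀ γ : Γ,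
      (G'.dist x₀' (ρ γ x₀') : ℝ) ≤ t * (G.dist x₀ (γ • x₀) : ℝ) + t'} with hS
  have hCρ : Cρ = sInf S := rfl
  have hconn : G.Connected := hG.isConnected
  have hconn' : G'.Connected := hG'.isConnected
  -- the action preserves adjacency in both directions
  have hadj : ∀ (γ : Γ) (u v : V), G.Adj (γ • u) (γ • v) ↔ G.Adj u v := by
    intro γ u v
    refine ⟨fun h => ?_, hact γ u v⟩
    have := hact γ⁻¹ _ _ h
    simpa using this
  -- the action preserves distances
  have hdist_smul : ∀ (γ : Γ) (u v : V), G.dist (γ • u) (γ • v) = G.dist u v := by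
    intro γ u v
    exact aux_iso_dist ⟨MulAction.toPerm γ, hadj γ _ _⟩ u v
  -- subadditivity of the displacement function of ρ
  have subadd : ∀ γ δ : Γ, G'.dist x₀' (ρ (γ * δ) x₀') ≤
      G'.dist x₀' (ρ γ x₀') + G'.dist x₀' (ρ δ x₀') := by
    intro γ δ
    have h1 : (ρ (γ * δ)) x₀' = (ρ γ) ((ρ δ) x₀') := by rw [map_mul]; rfl
    calc G'.dist x₀' (ρ (γ * δ) x₀')
        ≤ G'.dist x₀' (ρ γ x₀') + G'.dist (ρ γ x₀') (ρ (γ * δ) x₀') := hconn'.dist_triangle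
      _ = G'.dist x₀' (ρ γ x₀') + G'.dist x₀' (ρ δ x₀') := by
          rw [h1, aux_iso_dist (ρ γ) x₀' (ρ δ x₀')]
  -- properness of the action
  have hinj : Function.Injective (fun γ : Γ => γ • x₀) := by
    intro a b hab
    simp only at hab
    by_contra hne
    have h1 : (b⁻¹ * a) • x₀ = x₀ := by rw [mul_smul, hab, inv_smul_smul]
    exact hfree (b⁻¹ * a) (fun h => hne ((inv_mul_eq_one.mp h).symm)) x₀ h1
  have hproper : ∀ m : ℕ, {γ : Γ | G.dist x₀ (γ • x₀) ≤ m}.Finite := by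
    intro m
    have heq : {γ : Γ | G.dist x₀ (γ • x₀) ≤ m}
        = (fun γ : Γ => γ • x₀) ⁻¹' {v : V | G.dist x₀ v ≤ m} := rfl
    rw [heq]
    exact Set.Finite.preimage hinj.injOn (aux_ball_finite hconn x₀ m)
  -- cocompactness: the orbit of x₀ is C-dense
  obtain ⟨C, hC⟩ : ∃ C : ℕ, ∀ v : V, ∃ γ : Γ, G.dist (γ • x₀) v ≤ C := by
    have : Fintype (Quotient (MulAction.orbitRel Γ V)) := Fintype.ofFinite _
    refine ⟨Finset.univ.sup
      (fun q : Quotient (MulAction.orbitRel Γ V) => G.dist x₀ q.out), fun v => ?_⟩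
    have hrel : MulAction.orbitRel Γ V
        (Quotient.mk (MulAction.orbitRel Γ V) v).out v := Quotient.mk_out v
    obtain ⟨γ, hγ⟩ := MulAction.mem_orbit_iff.mp (MulAction.orbitRel_apply.mp hrel)
    refine ⟨γ⁻¹, ?_⟩
    have hv : (γ⁻¹ : Γ) • (γ • v) = v := inv_smul_smul γ v
    calc G.dist (γ⁻¹ • x₀) v = G.dist (γ⁻¹ • x₀) (γ⁻¹ • (γ • v)) := by rw [hv]
      _ = G.dist x₀ (γ • v) := hdist_smul γ⁻¹ _ _
      _ = G.dist x₀ (Quotient.mk (MulAction.orbitRel Γ V) v).out := by rw [hγ]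
      _ ≤ _ := Finset.le_sup
          (f := fun q : Quotient (MulAction.orbitRel Γ V) => G.dist x₀ q.out)
          (Finset.mem_univ _)
  -- the key splitting estimate
  have key : ∀ (L β : ℕ), C < L →
      (∀ δ : Γ, G.dist x₀ (δ • x₀) ≤ L + C → G'.dist x₀' (ρ δ x₀') ≤ β) →
      ∀ (n : ℕ) (γ : Γ), G.dist x₀ (γ • x₀) ≤ n →
      G'.dist x₀' (ρ γ x₀') * (L - C) ≤ β * G.dist x₀ (γ • x₀) + β * (L - C) := by
    intro L β hLC hβ n
    induction n with
    | zero =>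
      intro γ hγ
      have h1 : G'.dist x₀' (ρ γ x₀') ≤ β := hβ γ (by omega)
      calc G'.dist x₀' (ρ γ x₀') * (L - C) ≤ β * (L - C) := Nat.mul_le_mul_right _ h1
        _ ≤ _ := Nat.le_add_left _ _
    | succ n ih =>
      intro γ hγ
      by_cases hsmall : G.dist x₀ (γ • x₀) ≤ L + C
      · have h1 : G'.dist x₀' (ρ γ x₀') ≤ β := hβ γ hsmall
        calc G'.dist x₀' (ρ γ x₀') * (L - C) ≤ β * (L - C) := Nat.mul_le_mul_right _ h1
          _ ≤ _ := Nat.le_add_left _ _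
      · push_neg at hsmall
        obtain ⟨z, hz1, hz2⟩ := aux_exists_dist_split hconn x₀ (γ • x₀) L (by omega)
        obtain ⟨γ₁, hγ₁⟩ := hC z
        have hd1 : G.dist x₀ (γ₁ • x₀) ≤ L + C := by
          have ht := hconn.dist_triangle (u := x₀) (v := z) (w := γ₁ • x₀)
          have hcz : G.dist z (γ₁ • x₀) = G.dist (γ₁ • x₀) z := SimpleGraph.dist_comm
          omega
        have hf1 : G'.dist x₀' (ρ γ₁ x₀') ≤ β := hβ γ₁ hd1
        have heq : γ₁ • ((γ₁⁻¹ * γ) • x₀) = γ • x₀ := by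
          rw [← mul_smul, mul_inv_cancel_left]
        have hdδ : G.dist x₀ ((γ₁⁻¹ * γ) • x₀) + L ≤ G.dist x₀ (γ • x₀) + C := by
          have h1 : G.dist x₀ ((γ₁⁻¹ * γ) • x₀) = G.dist (γ₁ • x₀) (γ • x₀) := by
            rw [← heq]
            exact (hdist_smul γ₁ x₀ _).symm
          have h2 : G.dist (γ₁ • x₀) (γ • x₀)
              ≤ G.dist (γ₁ • x₀) z + G.dist z (γ • x₀) := hconn.dist_triangle
          omega
        have hrec := ih (γ₁⁻¹ * γ) (by omega)
        have hsplit : G'.dist x₀' (ρ γ x₀')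
            ≤ G'.dist x₀' (ρ γ₁ x₀') + G'.dist x₀' (ρ (γ₁⁻¹ * γ) x₀') := by
          have h1 := subadd γ₁ (γ₁⁻¹ * γ)
          rwa [mul_inv_cancel_left] at h1
        have h5 : G.dist x₀ ((γ₁⁻¹ * γ) • x₀) + (L - C) ≤ G.dist x₀ (γ • x₀) := by omega
        calc G'.dist x₀' (ρ γ x₀') * (L - C)
            ≤ (β + G'.dist x₀' (ρ (γ₁⁻¹ * γ) x₀')) * (L - C) :=
              Nat.mul_le_mul_right _ (by omega)
          _ = β * (L - C) + G'.dist x₀' (ρ (γ₁⁻¹ * γ) x₀') * (L - C) := by ring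
          _ ≤ β * (L - C) + (β * G.dist x₀ ((γ₁⁻¹ * γ) • x₀) + β * (L - C)) := by omega
          _ = β * (G.dist x₀ ((γ₁⁻¹ * γ) • x₀) + (L - C)) + β * (L - C) := by ring
          _ ≤ β * G.dist x₀ (γ • x₀) + β * (L - C) := by
              have h6 := Nat.mul_le_mul_left β h5
              omega
  -- membership criterion for the set S
  have hmem : ∀ (β K : ℕ), 0 < K →
      (∀ γ : Γ, G'.dist x₀' (ρ γ x₀') * K ≤ β * G.dist x₀ (γ • x₀) + β * K) →
      ((β : ℝ) / (K : ℝ)) ∈ S := by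
    intro β K hK hineq
    have hKpos : (0 : ℝ) < (K : ℝ) := by exact_mod_cast hK
    refine ⟨by positivity, (β : ℝ), by positivity, fun γ => ?_⟩
    have h1 : (G'.dist x₀' (ρ γ x₀') : ℝ) * K
        ≤ (β : ℝ) * (G.dist x₀ (γ • x₀) : ℝ) + (β : ℝ) * K := by exact_mod_cast hineq γ
    have h2 : (G'.dist x₀' (ρ γ x₀') : ℝ)
        ≤ ((β : ℝ) * (G.dist x₀ (γ • x₀) : ℝ) + (β : ℝ) * K) / K := (le_div_iff₀ hKpos).mpr h1
    calc (G'.dist x₀' (ρ γ x₀') : ℝ) ≤ _ := h2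
      _ = (β : ℝ) / K * (G.dist x₀ (γ • x₀) : ℝ) + (β : ℝ) := by field_simp
  -- S is nonempty
  have hS_ne : S.Nonempty := by
    obtain ⟨β₀, hb⟩ : ∃ β₀ : ℕ, ∀ δ : Γ,
        G.dist x₀ (δ • x₀) ≤ (C + 1) + C → G'.dist x₀' (ρ δ x₀') ≤ β₀ := by
      refine ⟨(hproper (C + 1 + C)).toFinset.sup (fun γ => G'.dist x₀' (ρ γ x₀')),
        fun δ h => ?_⟩
      exact Finset.le_sup (f := fun γ : Γ => G'.dist x₀' (ρ γ x₀'))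
        ((Set.Finite.mem_toFinset _).mpr h)
    refine ⟨(β₀ : ℝ) / ((C + 1 - C : ℕ) : ℝ), hmem β₀ (C + 1 - C) (by omega) ?_⟩
    intro γ
    exact key (C + 1) β₀ (by omega) hb (G.dist x₀ (γ • x₀)) γ le_rfl
  have hbdd : BddBelow S := ⟨0, fun t ht => ht.1⟩
  rw [hCρ]
  constructor
  · -- admissible → sInf S < 1
    intro hadm
    have hF := hadm (2 * (C : ℝ) + 1) (by positivity)
    obtain ⟨B, hBb⟩ : ∃ B : ℕ, ∀ δ ∈ {γ : Γ | ¬ ((G'.dist x₀' (ρ γ x₀') : ℝ)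
        ≤ (G.dist x₀ (γ • x₀) : ℝ) - (2 * (C : ℝ) + 1))}, G'.dist x₀' (ρ δ x₀') ≤ B := by
      refine ⟨hF.toFinset.sup (fun γ => G'.dist x₀' (ρ γ x₀')), fun δ h => ?_⟩
      exact Finset.le_sup (f := fun γ : Γ => G'.dist x₀' (ρ γ x₀'))
        ((Set.Finite.mem_toFinset _).mpr h)
    have hβ : ∀ δ : Γ, G.dist x₀ (δ • x₀) ≤ (B + C + 1) + C → G'.dist x₀' (ρ δ x₀') ≤ B := by
      intro δ hdδ
      by_cases hmemF : δ ∈ {γ : Γ | ¬ ((G'.dist x₀' (ρ γ x₀') : ℝ)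
          ≤ (G.dist x₀ (γ • x₀) : ℝ) - (2 * (C : ℝ) + 1))}
      · exact hBb δ hmemF
      · simp only [Set.mem_setOf_eq, not_not] at hmemF
        have h2 : (G.dist x₀ (δ • x₀) : ℝ) ≤ ((B + C + 1 + C : ℕ) : ℝ) := by
          exact_mod_cast hdδ
        push_cast at h2
        have h3 : (G'.dist x₀' (ρ δ x₀') : ℝ) ≤ (B : ℝ) := by linarith
        exact_mod_cast h3
    have hkey : ∀ γ : Γ, G'.dist x₀' (ρ γ x₀') * (B + 1)
        ≤ B * G.dist x₀ (γ • x₀) + B * (B + 1) := by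
      intro γ
      have h1 := key (B + C + 1) B (by omega) hβ (G.dist x₀ (γ • x₀)) γ le_rfl
      have h2 : B + C + 1 - C = B + 1 := by omega
      rwa [h2] at h1
    have hmemS := hmem B (B + 1) (by omega) hkey
    have hlt : ((B : ℕ) : ℝ) / (((B + 1 : ℕ)) : ℝ) < 1 := by
      rw [div_lt_one (by positivity)]
      exact_mod_cast Nat.lt_succ_self B
    exact lt_of_le_of_lt (csInf_le hbdd hmemS) hlt
  · -- sInf S < 1 → admissible
    intro hlt R hR
    obtain ⟨t, htS, ht1⟩ := exists_lt_of_csInf_lt hS_ne hlt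
    obtain ⟨ht0, t', ht'0, hb⟩ := htS
    apply (hproper ⌈(t' + R) / (1 - t)⌉₊).subset
    intro γ hγ
    simp only [Set.mem_setOf_eq, not_le] at hγ
    have h1 := hb γ
    have h2 : (1 - t) * (G.dist x₀ (γ • x₀) : ℝ) < t' + R := by nlinarith
    have h3 : (G.dist x₀ (γ • x₀) : ℝ) < (t' + R) / (1 - t) :=
      (lt_div_iff₀ (by linarith)).mpr (by nlinarith)
    have h4 : (G.dist x₀ (γ • x₀) : ℝ) ≤ (⌈(t' + R) / (1 - t)⌉₊ : ℝ) :=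
      le_trans h3.le (Nat.le_ceil _)
    simp only [Set.mem_setOf_eq]
    exact_mod_cast h4
end

section
/- Let G be a group and μ : G → ℝ a function satisfying μ(g) ≥ 0, μ(gh) ≤ μ(g) + μ(h), and μ(g⁻¹) = μ(g) for all g, h ∈ G. Let Γ₀ be a subgroup of G, let ρ : Γ₀ → G be a group homomorphism, and let R > 0 be a real number such that every g ∈ G can be written g = γ·h with γ ∈ Γ₀ and μ(h) ≤ R. Assume there is a finite subset F of Γ₀ such that μ(ρ(γ)) ≤ μ(γ) − 2R − 1 for every γ ∈ Γ₀ \ F, and let R' ≥ 0 be a real with μ(γ) ≤ R' for all γ ∈ F. Then every g ∈ G can be written g = γ·h·ρ(γ)⁻¹ with γ ∈ Γ₀ and μ(h) ≤ R + R'. -/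
/-!
Write `g = γ₁ h₁` with `μ h₁ ≤ R`. If `γ₁ ∈ F` then already `μ g ≤ R' + R`. Otherwise the twisted
conjugate `γ₁⁻¹ g ρ(γ₁) = h₁ ρ(γ₁)` satisfies
`μ (h₁ ρ(γ₁)) ≤ R + μ γ₁ - 2R - 1 ≤ R + (μ g + R) - 2R - 1 = μ g - 1`,
so twisting strictly lowers `μ` by at least `1`; since `μ ≥ 0` this descent stops after finitely
many steps, and it can only stop inside `{μ ≤ R + R'}`.
-/

theorem forall_of_descent {X : Type*} (f : X → ℝ) (hf : ∀ x, 0 ≤ f x) (P : X → Prop)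
    (step : ∀ x, P x ∨ ∃ y, f y ≤ f x - 1 ∧ (P y → P x)) : ∀ x, P x := by
  suffices h : ∀ n : ℕ, ∀ x, f x < n → P x from
    fun x => h (⌊f x⌋₊ + 1) x (by exact_mod_cast Nat.lt_floor_add_one (f x))
  intro n
  induction n with
  | zero => exact fun x hx => absurd hx (by simpa using hf x)
  | succ n ih =>
    intro x hx
    rcases step x with hPx | ⟨y, hy, hPy⟩
    · exact hPx
    · exact hPy (ih y (by push_cast at hx; linarith))

theorem le_mul_add_of_subadditive_of_symm {G : Type*} [Group G] {μ : G → ℝ}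
    (hsub : ∀ g h : G, μ (g * h) ≤ μ g + μ h) (hsymm : ∀ g : G, μ g⁻¹ = μ g) (a b : G) :
    μ a ≤ μ (a * b) + μ b := by
  simpa [hsymm] using hsub (a * b) b⁻¹

section TwistedConjugation

variable {G : Type*} [Group G] {Γ₀ : Subgroup G} (ρ : Γ₀ →* G)

def twistedSaturation (S : Set G) : Set G :=
  {g | ∃ γ : Γ₀, ∃ h ∈ S, g = (γ : G) * h * (ρ γ)⁻¹}

variable {ρ}

theorem subset_twistedSaturation (S : Set G) : S ⊆ twistedSaturation ρ S :=
  fun g hg => ⟨1, g, hg, by simp⟩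

theorem twisted_mem_twistedSaturation {S : Set G} {g : G} (hg : g ∈ twistedSaturation ρ S)
    (γ : Γ₀) : (γ : G) * g * (ρ γ)⁻¹ ∈ twistedSaturation ρ S := by
  obtain ⟨δ, h, hh, rfl⟩ := hg
  exact ⟨γ * δ, h, hh, by simp only [Subgroup.coe_mul, map_mul]; group⟩

end TwistedConjugation

theorem stmt_4_general {G : Type*} [Group G] (μ : G → ℝ)
    (hnonneg : ∀ g : G, 0 ≤ μ g)
    (hsub : ∀ g h : G, μ (g * h) ≤ μ g + μ h)
    (hsymm : ∀ g : G, μ g⁻¹ = μ g)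
    (Γ₀ : Subgroup G) (ρ : Γ₀ →* G)
    (R : ℝ)
    (hcover : ∀ g : G, ∃ γ : Γ₀, ∃ h : G, g = (γ : G) * h ∧ μ h ≤ R)
    (F : Finset Γ₀)
    (hadm : ∀ γ : Γ₀, γ ∉ F → μ (ρ γ) ≤ μ (γ : G) - 2 * R - 1)
    (R' : ℝ)
    (hF : ∀ γ ∈ F, μ (γ : G) ≤ R') :
    ∀ g : G, ∃ γ : Γ₀, ∃ h : G, g = (γ : G) * h * (ρ γ)⁻¹ ∧ μ h ≤ R + R' := by
  have hsat : ∀ g, g ∈ twistedSaturation ρ {h | μ h ≤ R + R'} := by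
    refine forall_of_descent μ hnonneg _ fun g => ?_
    obtain ⟨γ, h, rfl, hh⟩ := hcover g
    have hγ := le_mul_add_of_subadditive_of_symm hsub hsymm (γ : G) h
    by_cases hγF : γ ∈ F
    · exact .inl <| subset_twistedSaturation _ <|
        (hsub _ _).trans (by linarith [hF γ hγF])
    · refine .inr ⟨h * ρ γ, by linarith [hsub h (ρ γ), hadm γ hγF], fun hmem => ?_⟩
      simpa [mul_assoc] using twisted_mem_twistedSaturation hmem γ
  intro g
  obtain ⟨γ, h, hh, rfl⟩ := hsat g
  exact ⟨γ, h, rfl, hh⟩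

/-- **Proposition 3.6** (the "if" direction of the cocompactness criterion).
If `μ : G → ℝ` is nonnegative, subadditive and symmetric, if `Γ₀` together with the
`μ ≤ R` ball covers `G`, and if `μ(ρ(γ)) ≤ μ(γ) − 2R − 1` outside a finite set `F` on
which `μ ≤ R'`, then every `g ∈ G` can be written `g = γ·h·ρ(γ)⁻¹` with `μ(h) ≤ R + R'`. -/
theorem stmt_4 {G : Type*} [Group G] (μ : G → ℝ)
    (hnonneg : ∀ g : G, 0 ≤ μ g)
    (hsub : ∀ g h : G, μ (g * h) ≤ μ g + μ h)
    (hsymm : ∀ g : G, μ g⁻¹ = μ g)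
    (Γ₀ : Subgroup G) (ρ : Γ₀ →* G)
    (R : ℝ) (hR : 0 < R)
    (hcover : ∀ g : G, ∃ γ : Γ₀, ∃ h : G, g = (γ : G) * h ∧ μ h ≤ R)
    (F : Finset Γ₀)
    (hadm : ∀ γ : Γ₀, γ ∉ F → μ (ρ γ) ≤ μ (γ : G) - 2 * R - 1)
    (R' : ℝ) (hR' : 0 ≤ R')
    (hF : ∀ γ ∈ F, μ (γ : G) ≤ R') :
    ∀ g : G, ∃ γ : Γ₀, ∃ h : G, g = (γ : G) * h * (ρ γ)⁻¹ ∧ μ h ≤ R + R' :=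
  stmt_4_general μ hnonneg hsub hsymm Γ₀ ρ R hcover F hadm R' hF
end

section
/- Let G be a group and μ : G → ℝ a function satisfying μ(g) ≥ 0, μ(gh) ≤ μ(g) + μ(h), and μ(g⁻¹) = μ(g) for all g, h ∈ G. Let Γ₀ be a subgroup of G and ρ : Γ₀ → G a group homomorphism that is admissible, in the sense that for every R > 0 the set {γ ∈ Γ₀ : μ(ρ(γ)) > μ(γ) − R} is finite. Let g ∈ G, let C ≥ 0 be a real, let N be a natural number, and let F be a finite subset of Γ₀ such that μ(γ·gⁿ) ≥ μ(γ) + μ(gⁿ) − C for every γ ∈ Γ₀ \ F and every integer n > N. Assume moreover that μ(gⁿ) tends to infinity as n tends to infinity. Then for every R > 0 there exists an integer n > N such that μ(γ·gⁿ·ρ(γ)⁻¹) ≥ R for all γ ∈ Γ₀. -/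
/-!
Split `Γ₀` into the finite set of `γ` that lie in `F` or for which `μ(ρ γ) > μ(γ) - (R + C)`,
and the rest. On the finite part `μ(γ) + μ(ρ γ)` is bounded by some `M`, and
`μ(γ gⁿ ρ(γ)⁻¹) ≥ μ(gⁿ) - μ(γ) - μ(ρ γ)` is at least `R` once `μ(gⁿ) ≥ R + M`. On the rest the
lower bound on `μ(γ gⁿ)` and admissibility give
`μ(γ gⁿ ρ(γ)⁻¹) ≥ μ(γ gⁿ) - μ(ρ γ) ≥ μ(gⁿ) + R`, which is at least `R` once `μ(gⁿ) ≥ 0`.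
-/

open Filter

section Subadditive

variable {G : Type*} [Group G] {μ : G → ℝ}

theorem sub_le_of_subadditive_mul_inv (hsub : ∀ g h : G, μ (g * h) ≤ μ g + μ h) (a b : G) :
    μ a - μ b ≤ μ (a * b⁻¹) := by
  have := hsub (a * b⁻¹) b
  rw [inv_mul_cancel_right] at this
  linarith

theorem sub_le_of_subadditive_mul (hsub : ∀ g h : G, μ (g * h) ≤ μ g + μ h)
    (hsymm : ∀ g : G, μ g⁻¹ = μ g) (a b : G) : μ b - μ a ≤ μ (a * b) := by
  have := hsub a⁻¹ (a * b)
  rw [inv_mul_cancel_left, hsymm] at this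
  linarith

end Subadditive

theorem Set.finite_setOf_sub_lt_of_forall_pos {α : Type*} {f g : α → ℝ}
    (h : ∀ R : ℝ, 0 < R → {a | f a > g a - R}.Finite) (R : ℝ) : {a | f a > g a - R}.Finite :=
  (h (max R 1) (by positivity)).subset fun a ha => by
    simp only [Set.mem_ofPred_eq] at ha ⊢
    linarith [le_max_left R 1]

theorem stmt_5_general {G : Type*} [Group G] (μ : G → ℝ)
    (hsub : ∀ g h : G, μ (g * h) ≤ μ g + μ h)
    (hsymm : ∀ g : G, μ g⁻¹ = μ g)
    (Γ₀ : Subgroup G) (ρ : Γ₀ →* G)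
    (hadm : ∀ R : ℝ, 0 < R → {γ : Γ₀ | μ (ρ γ) > μ (γ : G) - R}.Finite)
    (g : G) (C : ℝ) (N : ℕ) (F : Finset Γ₀)
    (hlow : ∀ γ : Γ₀, γ ∉ F → ∀ n : ℕ, N < n →
      μ (γ : G) + μ (g ^ n) - C ≤ μ ((γ : G) * g ^ n))
    (hinf : Filter.Tendsto (fun n : ℕ => μ (g ^ n)) Filter.atTop Filter.atTop) :
    ∀ R : ℝ, 0 < R → ∃ n : ℕ, N < n ∧ ∀ γ : Γ₀, R ≤ μ ((γ : G) * g ^ n * (ρ γ)⁻¹) := by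
  intro R _
  classical
  have hfin := Set.finite_setOf_sub_lt_of_forall_pos hadm (R + C)
  set S : Finset Γ₀ := F ∪ hfin.toFinset
  obtain ⟨M, hM⟩ : BddAbove ((fun γ : Γ₀ => μ (γ : G) + μ (ρ γ)) '' S) :=
    (S.finite_toSet.image _).bddAbove
  obtain ⟨n, hNn, hRM, hpos⟩ : ∃ n, N < n ∧ R + M ≤ μ (g ^ n) ∧ 0 ≤ μ (g ^ n) :=
    ((eventually_gt_atTop N).and
      ((hinf.eventually_ge_atTop _).and (hinf.eventually_ge_atTop 0))).exists
  refine ⟨n, hNn, fun γ => ?_⟩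
  have hρ := sub_le_of_subadditive_mul_inv hsub ((γ : G) * g ^ n) (ρ γ)
  by_cases hγ : γ ∈ S
  · have := sub_le_of_subadditive_mul hsub hsymm (γ : G) (g ^ n)
    have := hM ⟨γ, hγ, rfl⟩
    linarith
  · simp only [S, Finset.mem_union, Set.Finite.mem_toFinset, Set.mem_ofPred_eq, not_or,
      not_lt] at hγ
    have := hlow γ hγ.1 n hNn
    linarith

/-- **Proposition 3.4** (the key step in the "only if" direction of the cocompactness
criterion). If `μ : G → ℝ` is nonnegative, subadditive and symmetric, if
`ρ : Γ₀ → G` is admissible, and if `μ(γ·gⁿ) ≥ μ(γ) + μ(gⁿ) − C` for all `γ` outside a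
finite set `F` and all `n > N`, with `μ(gⁿ) → ∞`, then for every `R > 0` there is
`n > N` with `μ(γ·gⁿ·ρ(γ)⁻¹) ≥ R` for all `γ ∈ Γ₀`. -/
theorem stmt_5 {G : Type*} [Group G] (μ : G → ℝ)
    (hnonneg : ∀ g : G, 0 ≤ μ g)
    (hsub : ∀ g h : G, μ (g * h) ≤ μ g + μ h)
    (hsymm : ∀ g : G, μ g⁻¹ = μ g)
    (Γ₀ : Subgroup G) (ρ : Γ₀ →* G)
    (hadm : ∀ R : ℝ, 0 < R → {γ : Γ₀ | μ (ρ γ) > μ (γ : G) - R}.Finite)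
    (g : G) (C : ℝ) (hC : 0 ≤ C) (N : ℕ) (F : Finset Γ₀)
    (hlow : ∀ γ : Γ₀, γ ∉ F → ∀ n : ℕ, N < n →
      μ (γ : G) + μ (g ^ n) - C ≤ μ ((γ : G) * g ^ n))
    (hinf : Filter.Tendsto (fun n : ℕ => μ (g ^ n)) Filter.atTop Filter.atTop) :
    ∀ R : ℝ, 0 < R → ∃ n : ℕ, N < n ∧ ∀ γ : Γ₀, R ≤ μ ((γ : G) * g ^ n * (ρ γ)⁻¹) :=
  stmt_5_general μ hsub hsymm Γ₀ ρ hadm g C N F hlow hinf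
end

section
/- Let X be a tree and let Γ₀ be a group acting on X by graph automorphisms, freely and without inversions. Let D be a set of vertices of X containing exactly one vertex of each Γ₀-orbit and inducing a connected subgraph of X, and let x₀ ∈ D. Let F = {γ ∈ Γ₀ \ {1} : some vertex of D is adjacent in X to some vertex of γ·D}. Suppose r ≥ 1 is an integer such that every vertex of X at distance at most r from D belongs to the union of the sets γ·D over γ ∈ F ∪ {1}. Then F generates Γ₀, and every γ ∈ Γ₀ \ {1} can be written as a product of at most ⌈d(x₀, γ·x₀)/r⌉ elements of F. -/
/-!
Induction on `n`: if `γ ∈ Γ`, `w ∈ D` and `d(x₀, γ·w) ≤ (n+1) r`, a geodesic from `x₀` to `γ·w`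
passes through a vertex `u` with `d(x₀, u) ≤ n r` and `d(u, γ·w) ≤ r`. If `u ∈ g·D`, then `g` is a
product of at most `n` elements of `F`, and `g⁻¹γ·w` lies within `r` of `D`, hence in `δ·D` for
some `δ ∈ F ∪ {1}` by the thickness hypothesis. Since the action is free and `D` is a fundamental
domain, `γ = gδ`.
-/

namespace SimpleGraph

variable {V W : Type*} {G : SimpleGraph V} {G' : SimpleGraph W}

lemma Reachable.dist_map_le (f : G →g G') {u v : V} (h : G.Reachable u v) :
    G'.dist (f u) (f v) ≤ G.dist u v := by
  obtain ⟨p, hp⟩ := h.exists_walk_length_eq_dist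
  simpa [hp] using G'.dist_le (p.map f)

lemma Reachable.exists_dist_le_dist_le {x v : V} (h : G.Reachable x v) {a b : ℕ}
    (hab : G.dist x v ≤ a + b) : ∃ u, G.dist x u ≤ a ∧ G.dist u v ≤ b := by
  obtain ⟨p, hp⟩ := h.exists_walk_length_eq_dist
  refine ⟨p.getVert a, (G.dist_le (p.take a)).trans ?_, (G.dist_le (p.drop a)).trans ?_⟩
  · simp [Walk.take_length]
  · rw [Walk.drop_length]; omega

end SimpleGraph

section WordLength

variable {Γ : Type*} [Group Γ] {F : Set Γ}

def WordLengthLE (F : Set Γ) (n : ℕ) (γ : Γ) : Prop :=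
  ∃ l : List Γ, (∀ x ∈ l, x ∈ F) ∧ l.prod = γ ∧ l.length ≤ n

lemma wordLengthLE_one (n : ℕ) : WordLengthLE F n 1 :=
  ⟨[], by simp, by simp, by simp⟩

lemma wordLengthLE_one_of_mem {x : Γ} (hx : x ∈ F) : WordLengthLE F 1 x :=
  ⟨[x], by simpa using hx, by simp, by simp⟩

lemma WordLengthLE.mono {m n : ℕ} {γ : Γ} (h : WordLengthLE F m γ) (hmn : m ≤ n) :
    WordLengthLE F n γ :=
  let ⟨l, hF, hprod, hlen⟩ := h
  ⟨l, hF, hprod, hlen.trans hmn⟩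

lemma WordLengthLE.mul {m n : ℕ} {a b : Γ} (ha : WordLengthLE F m a) (hb : WordLengthLE F n b) :
    WordLengthLE F (m + n) (a * b) := by
  obtain ⟨l, hlF, rfl, hl⟩ := ha
  obtain ⟨l', hl'F, rfl, hl'⟩ := hb
  refine ⟨l ++ l', ?_, List.prod_append, by simp only [List.length_append]; omega⟩
  simpa [or_imp, forall_and] using And.intro hlF hl'F

lemma WordLengthLE.mem_closure {n : ℕ} {γ : Γ} (h : WordLengthLE F n γ) :
    γ ∈ Subgroup.closure F := by
  obtain ⟨l, hF, rfl, -⟩ := h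
  exact list_prod_mem fun x hx => Subgroup.subset_closure (hF x hx)

end WordLength

section TreeAction

variable {V Γ : Type*} [Group Γ] [MulAction Γ V] {D : Set V}

lemma eq_of_smul_eq_smul_of_mem (hfree : ∀ γ : Γ, γ ≠ 1 → ∀ v : V, γ • v ≠ v)
    (hD : ∀ v : V, ∃! w : V, w ∈ D ∧ w ∈ MulAction.orbit Γ v)
    {γ₁ γ₂ : Γ} {w₁ w₂ : V} (hw₁ : w₁ ∈ D) (hw₂ : w₂ ∈ D) (h : γ₁ • w₁ = γ₂ • w₂) :
    γ₁ = γ₂ := by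
  have hw₂_eq : (γ₂⁻¹ * γ₁) • w₁ = w₂ := by rw [mul_smul, h, inv_smul_smul]
  have hw : w₁ = w₂ := (hD w₁).unique ⟨hw₁, MulAction.mem_orbit_self w₁⟩
    ⟨hw₂, hw₂_eq ▸ MulAction.mem_orbit w₁ _⟩
  subst hw
  by_contra hne
  exact hfree _ (fun h1 => hne (inv_mul_eq_one.mp h1).symm) w₁ hw₂_eq

end TreeAction

section TreeAction

variable {V Γ : Type*} [Group Γ] [MulAction Γ V] {D : Set V}

theorem wordLengthLE_of_dist_le {G : SimpleGraph V} (hconn : G.Connected)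
    (hact : ∀ (γ : Γ) (u v : V), G.Adj u v → G.Adj (γ • u) (γ • v))
    (hfree : ∀ γ : Γ, γ ≠ 1 → ∀ v : V, γ • v ≠ v)
    (hD : ∀ v : V, ∃! w : V, w ∈ D ∧ w ∈ MulAction.orbit Γ v)
    {x₀ : V} (hx₀ : x₀ ∈ D) {F : Set Γ} {r : ℕ}
    (hthick : ∀ v : V, (∃ u ∈ D, G.dist v u ≤ r) →
      ∃ γ : Γ, (γ ∈ F ∨ γ = 1) ∧ ∃ w ∈ D, v = γ • w)
    (n : ℕ) {γ : Γ} {w : V} (hw : w ∈ D) (h : G.dist x₀ (γ • w) ≤ n * r) :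
    WordLengthLE F n γ := by
  induction n generalizing γ w with
  | zero =>
    have hx₀w : (1 : Γ) • x₀ = γ • w := by
      rw [one_smul]; exact hconn.dist_eq_zero_iff.mp (by simpa using h)
    rw [← eq_of_smul_eq_smul_of_mem hfree hD hx₀ hw hx₀w]
    exact wordLengthLE_one 0
  | succ n ih =>
    rw [add_one_mul] at h
    obtain ⟨u, hx₀u, huv⟩ := (hconn.preconnected _ _).exists_dist_le_dist_le h
    obtain ⟨w₁, ⟨hw₁, g, hgu⟩, -⟩ := hD u
    have hg : WordLengthLE F n g⁻¹ := ih hw₁ (by rwa [← hgu, inv_smul_smul])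
    let smulHom : G →g G := ⟨(g • ·), hact g _ _⟩
    have hnear : G.dist (g • γ • w) w₁ ≤ r := by
      rw [← hgu, G.dist_comm]
      exact ((hconn.preconnected _ _).dist_map_le smulHom).trans huv
    obtain ⟨δ, hδ, w₂, hw₂, hδw₂⟩ := hthick _ ⟨w₁, hw₁, hnear⟩
    have hγ : γ = g⁻¹ * δ :=
      eq_of_smul_eq_smul_of_mem hfree hD hw hw₂ (by rw [mul_smul, ← hδw₂, inv_smul_smul])
    have hδ' : WordLengthLE F 1 δ := hδ.elim wordLengthLE_one_of_mem (· ▸ wordLengthLE_one 1)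
    exact hγ ▸ hg.mul hδ'

end TreeAction

lemma Nat.le_ceil_div_mul (d : ℕ) {r : ℕ} (hr : 0 < r) : d ≤ ⌈(d : ℝ) / r⌉₊ * r := by
  have hr' : (0 : ℝ) < r := by exact_mod_cast hr
  exact_mod_cast (div_le_iff₀ hr').mp (Nat.le_ceil ((d : ℝ) / r))

theorem stmt_6_general {V : Type*} (G : SimpleGraph V) (hG : G.IsTree)
    {Γ : Type*} [Group Γ] [MulAction Γ V]
    (hact : ∀ (γ : Γ) (u v : V), G.Adj u v → G.Adj (γ • u) (γ • v))
    (hfree : ∀ γ : Γ, γ ≠ 1 → ∀ v : V, γ • v ≠ v)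
    (D : Set V)
    (hDorb : ∀ v : V, ∃! w : V, w ∈ D ∧ w ∈ MulAction.orbit Γ v)
    (x₀ : V) (hx₀ : x₀ ∈ D)
    (F : Set Γ)
    (r : ℕ) (hr : 1 ≤ r)
    (hthick : ∀ v : V, (∃ u ∈ D, G.dist v u ≤ r) →
      ∃ γ : Γ, (γ ∈ F ∨ γ = 1) ∧ ∃ w ∈ D, v = γ • w) :
    Subgroup.closure F = ⊤ ∧
    ∀ γ : Γ, γ ≠ 1 → ∃ l : List Γ, (∀ x ∈ l, x ∈ F) ∧ l.prod = γ ∧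
      l.length ≤ ⌈(G.dist x₀ (γ • x₀) : ℝ) / (r : ℝ)⌉₊ := by
  have hword (γ : Γ) : WordLengthLE F ⌈(G.dist x₀ (γ • x₀) : ℝ) / (r : ℝ)⌉₊ γ :=
    wordLengthLE_of_dist_le hG.connected hact hfree hDorb hx₀ hthick _ hx₀
      (Nat.le_ceil_div_mul _ hr)
  exact ⟨eq_top_iff.mpr fun γ _ => (hword γ).mem_closure, fun γ _ => hword γ⟩

/-- The word-length estimate (6.1) of **Lemme 6.1** (unit edge-length form): if `D` is a
connected fundamental domain for a free action without inversions of `Γ` on a tree `X`,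
`F = {γ ≠ 1 : D is adjacent to γ·D}`, and every vertex at distance at most `r` from `D`
lies in `⋃_{γ ∈ F ∪ {1}} γ·D`, then `F` generates `Γ` and every `γ ≠ 1` is a product of
at most `⌈d(x₀, γ·x₀)/r⌉` elements of `F`. -/
theorem stmt_6 {V : Type*} (G : SimpleGraph V) (hG : G.IsTree)
    {Γ : Type*} [Group Γ] [MulAction Γ V]
    (hact : ∀ (γ : Γ) (u v : V), G.Adj u v → G.Adj (γ • u) (γ • v))
    (hfree : ∀ γ : Γ, γ ≠ 1 → ∀ v : V, γ • v ≠ v)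
    (hninv : ∀ γ : Γ, γ ≠ 1 → ∀ u v : V, G.Adj u v → ¬(γ • u = v ∧ γ • v = u))
    (D : Set V)
    (hDorb : ∀ v : V, ∃! w : V, w ∈ D ∧ w ∈ MulAction.orbit Γ v)
    (hDconn : (G.induce D).Connected)
    (x₀ : V) (hx₀ : x₀ ∈ D)
    (F : Set Γ)
    (hF : F = {γ : Γ | γ ≠ 1 ∧ ∃ u ∈ D, ∃ w ∈ D, G.Adj u (γ • w)})
    (r : ℕ) (hr : 1 ≤ r)
    (hthick : ∀ v : V, (∃ u ∈ D, G.dist v u ≤ r) →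
      ∃ γ : Γ, (γ ∈ F ∨ γ = 1) ∧ ∃ w ∈ D, v = γ • w) :
    Subgroup.closure F = ⊤ ∧
    ∀ γ : Γ, γ ≠ 1 → ∃ l : List Γ, (∀ x ∈ l, x ∈ F) ∧ l.prod = γ ∧
      l.length ≤ ⌈(G.dist x₀ (γ • x₀) : ℝ) / (r : ℝ)⌉₊ :=
  stmt_6_general G hG hact hfree D hDorb x₀ hx₀ F r hr hthick
end

section
/- Let X be a tree and let g₁, …, g_n be finitely many graph automorphisms of X, each of which fixes at least one vertex, such that no vertex of X is fixed by all of them. For each i let Fix(gᵢ) denote the set of vertices fixed by gᵢ. Then there exist indices i₁ and i₂ with Fix(g_{i₁}) ∩ Fix(g_{i₂}) = ∅; moreover, for any such pair of indices, letting x'' denote the unique vertex of Fix(g_{i₂}) at minimal distance from Fix(g_{i₁}), every vertex x of X satisfying d(x, gᵢ·x) ≤ R for all i (where R ≥ 0 is a real number) satisfies d(x, x'') ≤ R/2. -/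
open SimpleGraph

/-- The graph distance from a vertex `x` to a set `A` of vertices. -/
noncomputable def distToSet {V : Type*} (G : SimpleGraph V) (x : V) (A : Set V) : ℕ :=
  sInf ((fun a => G.dist x a) '' A)

namespace Lemme42
variable {V : Type*} {G : SimpleGraph V}


lemma getVert_map {W : Type*} {G' : SimpleGraph W} (f : G →g G') {u v : V}
    (w : G.Walk u v) (i : ℕ) : (w.map f).getVert i = f (w.getVert i) := by
  induction w generalizing i with
  | nil => simp [SimpleGraph.Walk.getVert]
  | cons h p ih =>
    cases i with
    | zero => simp
    | succ n => simpa using ih n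

lemma dist_iso (e : G ≃g G) (a b : V) : G.dist (e a) (e b) = G.dist a b := by
  have key : ∀ (f : G ≃g G) (x y : V), G.dist (f x) (f y) ≤ G.dist x y := by
    intro f x y
    by_cases hr : G.Reachable x y
    · obtain ⟨p, hp⟩ := hr.exists_walk_length_eq_dist
      calc G.dist (f x) (f y) ≤ (p.map f.toHom).length := SimpleGraph.dist_le _
        _ = G.dist x y := by rw [SimpleGraph.Walk.length_map, hp]
    · have : ¬ G.Reachable (f x) (f y) := by
        intro h
        have := h.map (f.symm.toHom)
        simp only [Iso.toHom, RelEmbedding.coe_toRelHom, RelIso.coe_toRelEmbedding,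
          RelIso.symm_apply_apply] at this
        exact hr this
      simp [SimpleGraph.dist_eq_zero_of_not_reachable this]
  refine le_antisymm (key e a b) ?_
  have := key e.symm (e a) (e b)
  simpa using this


lemma adj_dist_le_one {a b : V} (h : G.Adj a b) : G.dist a b ≤ 1 := by
  have := SimpleGraph.dist_le (h.toWalk)
  simpa using this

lemma dist_getVert_le (hc : G.Connected) {u v : V} (w : G.Walk u v) :
    ∀ (k i : ℕ), i + k ≤ w.length → G.dist (w.getVert i) (w.getVert (i + k)) ≤ k := by
  intro k
  induction k with
  | zero => intro i _; simp
  | succ n ih =>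
    intro i h
    have h1 := ih (i + 1) (by omega)
    have h2 : G.Adj (w.getVert i) (w.getVert (i + 1)) := w.adj_getVert_succ (by omega)
    have h3 := hc.dist_triangle (u := w.getVert i) (v := w.getVert (i + 1))
      (w := w.getVert (i + (n + 1)))
    have h4 : i + 1 + n = i + (n + 1) := by omega
    rw [h4] at h1
    have := adj_dist_le_one h2
    omega

lemma shortest_positions (hc : G.Connected) {u v : V} {w : G.Walk u v}
    (hw : w.length = G.dist u v) {i j : ℕ} (hij : i ≤ j) (hj : j ≤ w.length) :
    G.dist u (w.getVert i) = i ∧ G.dist (w.getVert i) (w.getVert j) = j - i ∧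
      G.dist (w.getVert j) v = w.length - j := by
  have ha := dist_getVert_le hc w i 0 (by omega)
  rw [Walk.getVert_zero, Nat.zero_add] at ha
  have hb := dist_getVert_le hc w (j - i) i (by omega)
  have hij' : i + (j - i) = j := by omega
  rw [hij'] at hb
  have hcc := dist_getVert_le hc w (w.length - j) j (by omega)
  have hj' : j + (w.length - j) = w.length := by omega
  rw [hj', Walk.getVert_length] at hcc
  have t1 := hc.dist_triangle (u := u) (v := w.getVert i) (w := v)
  have t2 := hc.dist_triangle (u := w.getVert i) (v := w.getVert j) (w := v)
  omega

lemma between_getVert (hG : G.IsTree) {u v r : V}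
    (h : G.dist u r + G.dist r v = G.dist u v)
    {w : G.Walk u v} (hw : w.length = G.dist u v) : w.getVert (G.dist u r) = r := by
  obtain ⟨w₁, h₁⟩ := (hG.isConnected u r).exists_walk_length_eq_dist
  obtain ⟨w₂, h₂⟩ := (hG.isConnected r v).exists_walk_length_eq_dist
  have hlen : (w₁.append w₂).length = G.dist u v := by
    rw [Walk.length_append]; omega
  have hp : (w₁.append w₂).IsPath :=
    Walk.isPath_of_length_eq_dist _ hlen
  have hwp : w.IsPath := Walk.isPath_of_length_eq_dist _ hw
  have heq : w = w₁.append w₂ := (hG.existsUnique_path u v).unique hwp hp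
  rw [heq, Walk.getVert_append, if_neg (by omega)]
  rw [h₁]
  simp

lemma between_dist (hG : G.IsTree) {u v r s : V}
    (hr : G.dist u r + G.dist r v = G.dist u v)
    (hs : G.dist u s + G.dist s v = G.dist u v)
    (hrs : G.dist u r ≤ G.dist u s) :
    G.dist r s = G.dist u s - G.dist u r := by
  obtain ⟨w, hw⟩ := (hG.isConnected u v).exists_walk_length_eq_dist
  have e1 := between_getVert hG hr hw
  have e2 := between_getVert hG hs hw
  have := (shortest_positions hG.isConnected hw hrs (by omega)).2.1
  rw [e1, e2] at this
  exact this

lemma exists_step (hG : G.IsTree) {u v : V} (h : u ≠ v) :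
    ∃ u₁, G.dist u u₁ = 1 ∧ G.dist u u₁ + G.dist u₁ v = G.dist u v := by
  obtain ⟨w, hw⟩ := (hG.isConnected u v).exists_walk_length_eq_dist
  have hpos : 0 < G.dist u v := hG.isConnected.pos_dist_of_ne h
  have h1 := shortest_positions hG.isConnected hw (le_refl 1) (by omega)
  refine ⟨w.getVert 1, h1.1, ?_⟩
  rw [h1.1, h1.2.2]
  omega

lemma isPath_append {u v x : V} {p : G.Walk u v} {q : G.Walk v x} (hp : p.IsPath)
    (hq : q.IsPath) (h : ∀ y, y ∈ p.support → y ∈ q.support → y = v) :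
    (p.append q).IsPath := by
  induction p with
  | nil => simpa
  | @cons a b c hadj p' ih =>
    rw [Walk.cons_append, Walk.cons_isPath_iff]
    rw [Walk.cons_isPath_iff] at hp
    constructor
    · exact ih hp.1 hq (fun y hy hy' => h y (by simp [hy]) hy')
    · rw [Walk.mem_support_append_iff]
      rintro (hmem | hmem)
      · exact hp.2 hmem
      · have hac : a = c := h a (by simp) hmem
        exact hp.2 (by rw [hac]; exact p'.end_mem_support)



lemma exists_median (hG : G.IsTree) (a b c : V) :
    ∃ m : V, G.dist a b = G.dist a m + G.dist m b ∧
      G.dist a c = G.dist a m + G.dist m c ∧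
      G.dist b c = G.dist b m + G.dist m c := by
  suffices H : ∀ (N : ℕ) (a b c : V), G.dist a b + G.dist a c ≤ N →
      ∃ m : V, G.dist a b = G.dist a m + G.dist m b ∧
        G.dist a c = G.dist a m + G.dist m c ∧
        G.dist b c = G.dist b m + G.dist m c by
    exact H _ a b c le_rfl
  intro N
  induction N with
  | zero =>
    intro a b c h
    have hab : G.dist a b = 0 := by omega
    have hac : G.dist a c = 0 := by omega
    have hb : a = b := (hG.isConnected.dist_eq_zero_iff).mp hab
    subst hb
    exact ⟨a, by simp [hab, hac]⟩
  | succ N ih =>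
    intro a b c h
    by_cases hbc : G.dist b c = G.dist b a + G.dist a c
    · exact ⟨a, by simp, by simp, hbc⟩
    · have htri : G.dist b c ≤ G.dist b a + G.dist a c := hG.isConnected.dist_triangle
      have hab : a ≠ b := by
        rintro rfl
        simp at hbc
      have hac : a ≠ c := by
        rintro rfl
        rw [dist_comm] at hbc
        simp at hbc
      obtain ⟨a₁, ha₁, hbet⟩ := exists_step hG hab
      obtain ⟨a₁', ha₁', hbet'⟩ := exists_step hG hac
      have hkey : a₁ = a₁' := by
        by_contra hne
        obtain ⟨w₁, h₁⟩ := (hG.isConnected a b).exists_walk_length_eq_dist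
        obtain ⟨w₂, h₂⟩ := (hG.isConnected a c).exists_walk_length_eq_dist
        have hp₁ : w₁.IsPath := Walk.isPath_of_length_eq_dist _ h₁
        have hp₂ : w₂.IsPath := Walk.isPath_of_length_eq_dist _ h₂
        have hsup : ∀ y, y ∈ w₁.reverse.support → y ∈ w₂.support → y = a := by
          intro y hy₁ hy₂
          rw [Walk.support_reverse, List.mem_reverse] at hy₁
          obtain ⟨i, hi, hile⟩ := Walk.mem_support_iff_exists_getVert.mp hy₁
          obtain ⟨j, hj, hjle⟩ := Walk.mem_support_iff_exists_getVert.mp hy₂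
          have pos₁ := (shortest_positions hG.isConnected h₁ (le_refl i) hile).1
          have pos₁' := (shortest_positions hG.isConnected h₁ (le_refl i) hile).2.2
          have pos₂ := (shortest_positions hG.isConnected h₂ (le_refl j) hjle).1
          have pos₂' := (shortest_positions hG.isConnected h₂ (le_refl j) hjle).2.2
          rw [hi] at pos₁ pos₁'
          rw [hj] at pos₂ pos₂'
          have hij : i = j := by rw [← pos₁, ← pos₂]
          rcases Nat.eq_zero_or_pos i with hz | hpos
          · rw [← hi, hz, Walk.getVert_zero]
          · -- y ≠ a, derive a₁ = a₁', contradiction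
            exfalso
            have hyb : G.dist a y + G.dist y b = G.dist a b := by
              rw [pos₁]
              omega
            have hyc : G.dist a y + G.dist y c = G.dist a c := by
              rw [pos₂]
              omega
            have h1y : G.dist a a₁ + G.dist a₁ y = G.dist a y := by
              have := between_dist hG hbet hyb (by omega)
              have htr : G.dist a y ≤ G.dist a a₁ + G.dist a₁ y :=
                hG.isConnected.dist_triangle
              omega
            have h2y : G.dist a a₁' + G.dist a₁' y = G.dist a y := by
              have := between_dist hG hbet' hyc (by omega)
              have htr : G.dist a y ≤ G.dist a a₁' + G.dist a₁' y :=
                hG.isConnected.dist_triangle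
              omega
            obtain ⟨wy, hwy⟩ := (hG.isConnected a y).exists_walk_length_eq_dist
            have e1 := between_getVert hG h1y hwy
            have e2 := between_getVert hG h2y hwy
            rw [ha₁] at e1
            rw [ha₁'] at e2
            rw [e1] at e2
            exact hne e2
        have hpath : (w₁.reverse.append w₂).IsPath :=
          isPath_append (hp₁.reverse) hp₂ hsup
        obtain ⟨w₃, h₃⟩ := (hG.isConnected b c).exists_walk_length_eq_dist
        have hp₃ : w₃.IsPath := Walk.isPath_of_length_eq_dist _ h₃
        have heq := (hG.existsUnique_path b c).unique hp₃ hpath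
        have hlen : G.dist b c = G.dist a b + G.dist a c := by
          have : w₃.length = (w₁.reverse.append w₂).length := by rw [heq]
          rw [Walk.length_append, Walk.length_reverse, h₁, h₂] at this
          omega
        have hcm : G.dist b a = G.dist a b := SimpleGraph.dist_comm
        exact hbc (by rw [hcm]; exact hlen)
      subst hkey
      have hdb : G.dist a₁ b + 1 = G.dist a b := by omega
      have hdc : G.dist a₁ c + 1 = G.dist a c := by omega
      obtain ⟨m, hm1, hm2, hm3⟩ := ih a₁ b c (by omega)
      have t1 : G.dist a m ≤ G.dist a a₁ + G.dist a₁ m := hG.isConnected.dist_triangle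
      have t2 : G.dist a b ≤ G.dist a m + G.dist m b := hG.isConnected.dist_triangle
      have t3 : G.dist a c ≤ G.dist a m + G.dist m c := hG.isConnected.dist_triangle
      exact ⟨m, by omega, by omega, hm3⟩



def Conv (G : SimpleGraph V) (A : Set V) : Prop :=
  ∀ ⦃p q m : V⦄, p ∈ A → q ∈ A → G.dist p m + G.dist m q = G.dist p q → m ∈ A

lemma conv_inter {A B : Set V} (hA : Conv G A) (hB : Conv G B) : Conv G (A ∩ B) :=
  fun _ _ _ hp hq hs => ⟨hA hp.1 hq.1 hs, hB hp.2 hq.2 hs⟩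

lemma fix_conv (hG : G.IsTree) (e : G ≃g G) : Conv G {v : V | e v = v} := by
  intro p q m hp hq hsum
  obtain ⟨w, hw⟩ := (hG.isConnected p q).exists_walk_length_eq_dist
  have hm := between_getVert hG hsum hw
  have hwp : w.IsPath := Walk.isPath_of_length_eq_dist _ hw
  have hinj : Function.Injective (e.toHom : V → V) := e.toEquiv.injective
  have hp' : e p = p := hp
  have hq' : e q = q := hq
  let w' : G.Walk p q := (w.map e.toHom).copy hp' hq'
  have hw'p : w'.IsPath := by
    simp only [w', Walk.isPath_copy]
    exact Walk.map_isPath_of_injective hinj hwp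
  have hw'len : w'.length = G.dist p q := by
    simp only [w', Walk.length_copy, Walk.length_map, hw]
  have heq : w = w' := (hG.existsUnique_path p q).unique hwp hw'p
  have : w'.getVert (G.dist p m) = e m := by
    simp only [w', Walk.getVert_copy, getVert_map, hm]
    rfl
  show e m = m
  rw [← this, ← heq, hm]

noncomputable def distToSet' (G : SimpleGraph V) (x : V) (A : Set V) : ℕ :=
  sInf ((fun a => G.dist x a) '' A)

lemma distToSet'_le {A : Set V} {a : V} (x : V) (ha : a ∈ A) :
    distToSet' G x A ≤ G.dist x a :=
  Nat.sInf_le ⟨a, ha, rfl⟩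

lemma distToSet'_exists {A : Set V} (hA : A.Nonempty) (x : V) :
    ∃ a ∈ A, G.dist x a = distToSet' G x A := by
  have := Nat.sInf_mem (hA.image (fun a => G.dist x a))
  obtain ⟨a, ha, heq⟩ := this
  exact ⟨a, ha, heq⟩

lemma exists_gate (hG : G.IsTree) {A : Set V} (hconv : Conv G A) (hA : A.Nonempty) (x : V) :
    ∃ p ∈ A, G.dist x p = distToSet' G x A ∧
      ∀ y ∈ A, G.dist x y = G.dist x p + G.dist p y := by
  obtain ⟨p, hpA, hp⟩ := distToSet'_exists hA x
  refine ⟨p, hpA, hp, ?_⟩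
  intro y hy
  obtain ⟨m, hm1, hm2, hm3⟩ := exists_median hG x p y
  have hmA : m ∈ A := hconv hpA hy hm3.symm
  have h1 : distToSet' G x A ≤ G.dist x m := distToSet'_le x hmA
  have hmp : G.dist m p = 0 := by omega
  have hmpe : m = p := hG.isConnected.dist_eq_zero_iff.mp hmp
  subst hmpe
  exact hm2

lemma exists_midpoint (hG : G.IsTree) (e : G ≃g G) {v : V} (hv : e v = v) (x : V) :
    ∃ m, e m = m ∧ G.dist x (e x) = 2 * G.dist x m := by
  obtain ⟨m, hm1, hm2, hm3⟩ := exists_median hG x (e x) v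
  have hdv : G.dist v (e x) = G.dist v x := by
    have := dist_iso e v x
    rw [hv] at this
    exact this
  have hc1 : G.dist v (e x) = G.dist v m + G.dist m (e x) := by
    have c1 : G.dist (e x) v = G.dist v (e x) := SimpleGraph.dist_comm
    have c2 : G.dist (e x) m = G.dist m (e x) := SimpleGraph.dist_comm
    have c3 : G.dist m v = G.dist v m := SimpleGraph.dist_comm
    omega
  have hc2 : G.dist v x = G.dist v m + G.dist m x := by
    have c1 : G.dist x v = G.dist v x := SimpleGraph.dist_comm
    have c2 : G.dist x m = G.dist m x := SimpleGraph.dist_comm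
    have c3 : G.dist m v = G.dist v m := SimpleGraph.dist_comm
    omega
  have hmx : G.dist m (e x) = G.dist m x := by omega
  have hde : G.dist v (e m) = G.dist v m := by
    have := dist_iso e v m
    rw [hv] at this
    exact this
  have hdemex : G.dist (e m) (e x) = G.dist m x := dist_iso e m x
  have hb1 : G.dist v m + G.dist m (e x) = G.dist v (e x) := hc1.symm
  have hb2 : G.dist v (e m) + G.dist (e m) (e x) = G.dist v (e x) := by omega
  obtain ⟨w, hw⟩ := (hG.isConnected v (e x)).exists_walk_length_eq_dist
  have g1 := between_getVert hG hb1 hw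
  have g2 := between_getVert hG hb2 hw
  rw [hde] at g2
  have hem : e m = m := g2.symm.trans g1
  refine ⟨m, hem, ?_⟩
  have c2 : G.dist m x = G.dist x m := SimpleGraph.dist_comm
  omega

lemma helly (hG : G.IsTree) : ∀ (k : ℕ) (A : Fin (k + 1) → Set V),
    (∀ i, Conv G (A i)) → (∀ i j, (A i ∩ A j).Nonempty) → (⋂ i, A i).Nonempty := by
  intro k
  induction k with
  | zero =>
    intro A _ hpair
    obtain ⟨x, hx, _⟩ := hpair 0 0
    refine ⟨x, Set.mem_iInter.mpr fun i => ?_⟩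
    have h0 : (i : ℕ) = 0 := by have := i.isLt; omega
    have hi0 : i = 0 := Fin.ext (by simp [h0])
    rw [hi0]; exact hx
  | succ k ih =>
    intro A hconv hpair
    set B : Fin (k + 1) → Set V := fun i => A i.castSucc ∩ A (Fin.last (k + 1)) with hB
    have hBconv : ∀ i, Conv G (B i) :=
      fun i => conv_inter (hconv _) (hconv _)
    have hBpair : ∀ i j, (B i ∩ B j).Nonempty := by
      intro i j
      obtain ⟨p, hp⟩ := hpair i.castSucc j.castSucc
      obtain ⟨r, hr⟩ := hpair i.castSucc (Fin.last (k + 1))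
      obtain ⟨s, hs⟩ := hpair j.castSucc (Fin.last (k + 1))
      obtain ⟨m, hm1, hm2, hm3⟩ := exists_median hG p r s
      refine ⟨m, ⟨⟨hconv _ hp.1 hr.1 hm1.symm, hconv _ hr.2 hs.2 hm3.symm⟩,
        ⟨hconv _ hp.2 hs.1 hm2.symm, hconv _ hr.2 hs.2 hm3.symm⟩⟩⟩
    obtain ⟨x, hx⟩ := ih B hBconv hBpair
    refine ⟨x, Set.mem_iInter.mpr fun i => ?_⟩
    refine Fin.lastCases ?_ (fun j => ?_) i
    · exact (Set.mem_iInter.mp hx 0).2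
    · exact (Set.mem_iInter.mp hx j).1



lemma gate_unique (hG : G.IsTree) {A : Set V} {x p p' : V} (hpA : p ∈ A)
    (hgate : ∀ y ∈ A, G.dist x y = G.dist x p + G.dist p y)
    (hp'A : p' ∈ A) (hval : G.dist x p' ≤ G.dist x p) : p' = p := by
  have := hgate p' hp'A
  have h0 : G.dist p p' = 0 := by omega
  exact (hG.isConnected.dist_eq_zero_iff.mp h0).symm

lemma two_sets (hG : G.IsTree) {A B : Set V} (hAc : Conv G A) (hBc : Conv G B)
    (hA : A.Nonempty) (hB : B.Nonempty) (hdisj : A ∩ B = ∅) :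
    ∃ x'' ∈ B, (∀ y ∈ B, distToSet' G x'' A ≤ distToSet' G y A) ∧
      (∀ b ∈ B, (∀ y ∈ B, distToSet' G b A ≤ distToSet' G y A) → b = x'') ∧
      (∀ a ∈ A, ∀ b ∈ B, ∀ x : V, G.dist x x'' ≤ max (G.dist x a) (G.dist x b)) := by
  classical
  have hne : ∀ {u : V}, u ∈ A → u ∈ B → False := by
    intro u hu hv
    have : u ∈ A ∩ B := ⟨hu, hv⟩
    rw [hdisj] at this
    exact this
  obtain ⟨x'', hx''B, hval⟩ :
      ∃ x'' ∈ B, distToSet' G x'' A = sInf ((fun y => distToSet' G y A) '' B) := by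
    have := Nat.sInf_mem (hB.image (fun y => distToSet' G y A))
    obtain ⟨y, hy, hyv⟩ := this
    exact ⟨y, hy, hyv⟩
  have hmin : ∀ y ∈ B, distToSet' G x'' A ≤ distToSet' G y A := by
    intro y hy
    rw [hval]
    exact Nat.sInf_le ⟨y, hy, rfl⟩
  set D := distToSet' G x'' A with hD
  have hD1 : 1 ≤ D := by
    rcases Nat.eq_zero_or_pos D with h0 | h1
    · exfalso
      obtain ⟨a, haA, hav⟩ := distToSet'_exists hA x''
      rw [← hD, h0] at hav
      have : x'' = a := hG.isConnected.dist_eq_zero_iff.mp hav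
      exact hne (this ▸ haA) hx''B
    · exact h1
  have hglobal : ∀ bb ∈ B, ∀ aa ∈ A, D ≤ G.dist bb aa := by
    intro bb hbb aa haa
    exact le_trans (hmin bb hbb) (distToSet'_le bb haa)
  obtain ⟨q, hqA, hqv, hqgate⟩ := exists_gate hG hAc hA x''
  rw [← hD] at hqv
  have hG1 : ∀ y ∈ B, G.dist q y = D + G.dist x'' y := by
    intro y hy
    obtain ⟨pq, hpqB, hpqv, hpqgate⟩ := exists_gate hG hBc hB q
    have c1 : G.dist q x'' = G.dist x'' q := SimpleGraph.dist_comm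
    have h1 : G.dist q pq ≤ D := by
      rw [hpqv]
      exact le_trans (distToSet'_le q hx''B) (by omega)
    have h2 : D ≤ G.dist q pq := by
      have := hglobal pq hpqB q hqA
      have c2 : G.dist pq q = G.dist q pq := SimpleGraph.dist_comm
      omega
    have h3 := hpqgate x'' hx''B
    have h4 : G.dist pq x'' = 0 := by omega
    have h5 : pq = x'' := hG.isConnected.dist_eq_zero_iff.mp h4
    have h6 := hpqgate y hy
    rw [h5] at h6
    omega
  have hconst : ∀ (k : ℕ) (y : V), y ∈ B → G.dist x'' y = k →
      ∀ qy ∈ A, G.dist y qy = distToSet' G y A → qy = q := by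
    intro k
    induction k using Nat.strong_induction_on with
    | _ k ihk =>
      intro y hy hk qy hqyA hqyv
      rcases Nat.eq_zero_or_pos k with rfl | hkpos
      · have hyx : x'' = y := hG.isConnected.dist_eq_zero_iff.mp hk
        subst hyx
        have := hqgate qy hqyA
        rw [hqyv, ← hD] at this
        have h0 : G.dist q qy = 0 := by omega
        exact (hG.isConnected.dist_eq_zero_iff.mp h0).symm
      · have hyne : y ≠ x'' := by
          intro h
          rw [h] at hk
          simp [SimpleGraph.dist_self] at hk
          omega
        obtain ⟨y₁, hy₁d, hy₁bet⟩ := exists_step hG hyne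
        have hy₁B : y₁ ∈ B := hBc hy hx''B hy₁bet
        have hxy : G.dist x'' y = G.dist y x'' := SimpleGraph.dist_comm
        have hxy₁ : G.dist x'' y₁ = G.dist y₁ x'' := SimpleGraph.dist_comm
        have hky₁ : G.dist x'' y₁ = k - 1 := by omega
        obtain ⟨p₁, hp₁A, hp₁v, hp₁gate⟩ := exists_gate hG hAc hA y₁
        have hp₁q : p₁ = q := ihk (k - 1) (by omega) y₁ hy₁B hky₁ p₁ hp₁A hp₁v
        obtain ⟨py, hpyA, hpyv, hpygate⟩ := exists_gate hG hAc hA y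
        have hqypy : qy = py := gate_unique hG hpyA hpygate hqyA (by rw [hqyv, hpyv])
        rw [hqypy, ← hp₁q]
        -- edge argument: show py = p₁
        have d1 : G.dist y p₁ = G.dist y py + G.dist py p₁ := hpygate p₁ hp₁A
        have d2 : G.dist y₁ py = G.dist y₁ p₁ + G.dist p₁ py := hp₁gate py hpyA
        have t1 : G.dist y p₁ ≤ G.dist y y₁ + G.dist y₁ p₁ := hG.isConnected.dist_triangle
        have t2 : G.dist y₁ py ≤ G.dist y₁ y + G.dist y py := hG.isConnected.dist_triangle
        have c1 : G.dist py p₁ = G.dist p₁ py := SimpleGraph.dist_comm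
        have c2 : G.dist y₁ y = G.dist y y₁ := SimpleGraph.dist_comm
        have hle1 : G.dist py p₁ ≤ 1 := by omega
        rcases Nat.lt_or_ge (G.dist py p₁) 1 with h01 | h11
        · have h0 : G.dist py p₁ = 0 := by omega
          exact hG.isConnected.dist_eq_zero_iff.mp h0
        · exfalso
          have heq1 : G.dist py p₁ = 1 := by omega
          have hss' : G.dist y py = G.dist y₁ p₁ := by omega
          have hs1 : 1 ≤ G.dist y py := by
            rcases Nat.eq_zero_or_pos (G.dist y py) with h0 | h1
            · exfalso
              have : y = py := hG.isConnected.dist_eq_zero_iff.mp (by omega)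
              exact hne (this ▸ hpyA) hy
            · exact h1
          obtain ⟨m₃, hm1, hm2, hm3⟩ := exists_median hG y py p₁
          have hm₃A : m₃ ∈ A := hAc hpyA hp₁A hm3.symm
          have hm₃ge : G.dist y py ≤ G.dist y m₃ := by
            rw [hpyv]
            exact distToSet'_le y hm₃A
          have hm₃py : m₃ = py := by
            have c3 : G.dist py m₃ = G.dist m₃ py := SimpleGraph.dist_comm
            exact hG.isConnected.dist_eq_zero_iff.mp (by omega)
          subst hm₃py
          have B1 : G.dist y m₃ + G.dist m₃ p₁ = G.dist y p₁ := by omega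
          have B2 : G.dist y y₁ + G.dist y₁ p₁ = G.dist y p₁ := by omega
          obtain ⟨w, hw⟩ := (hG.isConnected y p₁).exists_walk_length_eq_dist
          have g1 := between_getVert hG B2 hw
          have g2 := between_getVert hG B1 hw
          have hpos := shortest_positions hG.isConnected hw
            (i := G.dist y y₁) (j := G.dist y m₃) (by omega) (by omega)
          rw [g1, g2] at hpos
          have hfin := hpos.2.1
          omega
  have hbridge : ∀ y ∈ B, distToSet' G y A = D + G.dist x'' y := by
    intro y hy
    obtain ⟨py, hpyA, hpyv, hpygate⟩ := exists_gate hG hAc hA y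
    have hpyq : py = q := hconst (G.dist x'' y) y hy rfl py hpyA hpyv
    rw [hpyq] at hpyv
    have := hG1 y hy
    have c1 : G.dist y q = G.dist q y := SimpleGraph.dist_comm
    omega
  refine ⟨x'', hx''B, hmin, ?_, ?_⟩
  · intro b hb hbmin
    have h1 : distToSet' G b A = D := le_antisymm (hbmin x'' hx''B) (hmin b hb)
    have h2 := hbridge b hb
    have h0 : G.dist x'' b = 0 := by omega
    exact (hG.isConnected.dist_eq_zero_iff.mp h0).symm
  · intro a ha b hb x
    have hbet : G.dist a x'' + G.dist x'' b = G.dist a b := by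
      obtain ⟨pb, hpbA, hpbv, hpbgate⟩ := exists_gate hG hAc hA b
      have hpbq : pb = q := hconst (G.dist x'' b) b hb rfl pb hpbA hpbv
      have e1 := hpbgate a ha
      rw [hpbq] at e1 hpbv
      have e2 := hG1 b hb
      have e3 := hqgate a ha
      have c1 : G.dist b q = G.dist q b := SimpleGraph.dist_comm
      have c2 : G.dist a b = G.dist b a := SimpleGraph.dist_comm
      have c3 : G.dist a x'' = G.dist x'' a := SimpleGraph.dist_comm
      omega
    obtain ⟨m, hm1, hm2, hm3⟩ := exists_median hG x a b
    have hmbet : G.dist a m + G.dist m b = G.dist a b := by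
      have c1 : G.dist a m = G.dist m a := SimpleGraph.dist_comm
      omega
    have tri : G.dist x x'' ≤ G.dist x m + G.dist m x'' := hG.isConnected.dist_triangle
    rcases le_or_gt (G.dist a x'') (G.dist a m) with hcase | hcase
    · have hd := between_dist hG hbet hmbet hcase
      have c1 : G.dist x'' m = G.dist m x'' := SimpleGraph.dist_comm
      have c2 : G.dist a m = G.dist m a := SimpleGraph.dist_comm
      have hfin : G.dist x x'' ≤ G.dist x a := by omega
      exact le_trans hfin (le_max_left _ _)
    · have hd := between_dist hG hmbet hbet (by omega)
      have c1 : G.dist a x'' ≤ G.dist a b := by omega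
      have hfin : G.dist x x'' ≤ G.dist x b := by omega
      exact le_trans hfin (le_max_right _ _)

end Lemme42

/-- The all-elliptic case of **Lemme 4.2**: if finitely many automorphisms `gᵢ` of a
tree each fix a vertex but admit no common fixed vertex, then two of their fixed-vertex
sets are disjoint; and for any two indices with `Fix(g_{i₁}) ∩ Fix(g_{i₂}) = ∅`, the
vertex `x''` of `Fix(g_{i₂})` closest to `Fix(g_{i₁})` is unique and satisfies
`d(x, x'') ≤ R/2` for every vertex `x` with `d(x, gᵢ·x) ≤ R` for all `i`. -/
theorem stmt_9 {V : Type*} (G : SimpleGraph V) (hG : G.IsTree)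
    (n : ℕ) (g : Fin n → (G ≃g G))
    (hfix : ∀ i : Fin n, ∃ v : V, g i v = v)
    (hnocommon : ¬ ∃ v : V, ∀ i : Fin n, g i v = v) :
    (∃ i₁ i₂ : Fin n, {v : V | g i₁ v = v} ∩ {v : V | g i₂ v = v} = ∅) ∧
    ∀ i₁ i₂ : Fin n, {v : V | g i₁ v = v} ∩ {v : V | g i₂ v = v} = ∅ →
      (∃! x'' : V, x'' ∈ {v : V | g i₂ v = v} ∧
        ∀ y ∈ {v : V | g i₂ v = v},
          distToSet G x'' {v : V | g i₁ v = v} ≤ distToSet G y {v : V | g i₁ v = v}) ∧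
      (∀ x'' : V,
        (x'' ∈ {v : V | g i₂ v = v} ∧
          ∀ y ∈ {v : V | g i₂ v = v},
            distToSet G x'' {v : V | g i₁ v = v} ≤ distToSet G y {v : V | g i₁ v = v}) →
        ∀ R : ℝ, 0 ≤ R → ∀ x : V,
          (∀ i : Fin n, (G.dist x (g i x) : ℝ) ≤ R) → (G.dist x x'' : ℝ) ≤ R / 2) := by
  classical
  have hVne : Nonempty V := hG.isConnected.nonempty
  have part1 : ∃ i₁ i₂ : Fin n, {v : V | g i₁ v = v} ∩ {v : V | g i₂ v = v} = ∅ := by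
    by_contra hcon
    push_neg at hcon
    have hpair : ∀ i j : Fin n, ({v : V | g i v = v} ∩ {v : V | g j v = v}).Nonempty :=
      fun i j => hcon i j
    cases n with
    | zero =>
      obtain ⟨v⟩ := hVne
      exact hnocommon ⟨v, fun i => i.elim0⟩
    | succ m =>
      obtain ⟨v, hv⟩ := Lemme42.helly hG m (fun i => {v : V | g i v = v})
        (fun i => Lemme42.fix_conv hG (g i)) hpair
      exact hnocommon ⟨v, fun i => Set.mem_iInter.mp hv i⟩
  refine ⟨part1, ?_⟩
  intro i₁ i₂ hdisj
  have hAc := Lemme42.fix_conv hG (g i₁)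
  have hBc := Lemme42.fix_conv hG (g i₂)
  obtain ⟨v₁, hv₁⟩ := hfix i₁
  obtain ⟨v₂, hv₂⟩ := hfix i₂
  have hA : ({v : V | g i₁ v = v}).Nonempty := ⟨v₁, hv₁⟩
  have hB : ({v : V | g i₂ v = v}).Nonempty := ⟨v₂, hv₂⟩
  obtain ⟨x'', hx''B, hminx, huniq, hbound⟩ :=
    Lemme42.two_sets hG hAc hBc hA hB hdisj
  constructor
  · exact ⟨x'', ⟨hx''B, hminx⟩, fun y hy => huniq y hy.1 hy.2⟩
  · intro z hz R hR x hx
    have hz' : z = x'' := huniq z hz.1 hz.2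
    obtain ⟨ma, hma, hda⟩ := Lemme42.exists_midpoint hG (g i₁) hv₁ x
    obtain ⟨mb, hmb, hdb⟩ := Lemme42.exists_midpoint hG (g i₂) hv₂ x
    have hb1 : G.dist x z ≤ max (G.dist x ma) (G.dist x mb) := by
      rw [hz']
      exact hbound ma hma mb hmb x
    have h1 : (G.dist x (g i₁ x) : ℝ) ≤ R := hx i₁
    have h2 : (G.dist x (g i₂ x) : ℝ) ≤ R := hx i₂
    have ha2 : (G.dist x ma : ℝ) ≤ R / 2 := by
      rw [hda] at h1
      push_cast at h1
      linarith
    have hb2 : (G.dist x mb : ℝ) ≤ R / 2 := by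
      rw [hdb] at h2
      push_cast at h2
      linarith
    rcases le_total (G.dist x ma) (G.dist x mb) with hcmp | hcmp
    · rw [max_eq_right hcmp] at hb1
      calc (G.dist x z : ℝ) ≤ (G.dist x mb : ℝ) := Nat.cast_le.mpr hb1
        _ ≤ R / 2 := hb2
    · rw [max_eq_left hcmp] at hb1
      calc (G.dist x z : ℝ) ≤ (G.dist x ma : ℝ) := Nat.cast_le.mpr hb1
        _ ≤ R / 2 := ha2
end

section
/- Let X be a tree and g a graph automorphism of X that fixes no vertex and does not exchange two adjacent vertices. Let λ(g) = min over vertices v of d(v, g·v), and let A_g = {v : d(v, g·v) = λ(g)}. Then for every vertex x of X and every integer n ≥ 1, one has d(x, gⁿ·x) = n·λ(g) + 2·d(x, A_g), where d(x, A_g) denotes the minimal distance from x to a vertex of A_g. -/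
open SimpleGraph

/-- The translation length of a self-map `f` of the vertex set of a graph `G`:
`λ(f) = min over vertices v of d(v, f v)`. -/
noncomputable def translationLength {V : Type*} (G : SimpleGraph V) (f : V → V) : ℕ :=
  ⨅ v : V, G.dist v (f v)

/-!
Write `towards v w` for the first step of the geodesic from `v` to `w`. In a tree, the
concatenation of geodesics `[u, v]` and `[v, w]` is again a geodesic as soon as it does not
backtrack at `v`, i.e. `towards v u ≠ towards v w`.

Pick `z` on the axis nearest to `x`. Minimality of `d(z, g z)` rules out backtracking at `g z`
(otherwise the second vertex of `[z, g z]` would be displaced by less, or `g` would invert an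
edge), so the points `gⁿ z` lie on one geodesic and `d(z, gⁿ z) = n λ(g)`. Minimality of
`d(x, z)` rules out backtracking at `z` and at `gⁿ z` along `[x, z] [z, gⁿ z] [gⁿ z, gⁿ x]`,
hence `d(x, gⁿ x) = d(x, z) + n λ(g) + d(x, z)`.
-/

lemma translationLength_le_dist {V : Type*} (G : SimpleGraph V) (f : V → V) (v : V) :
    translationLength G f ≤ G.dist v (f v) :=
  ciInf_le (OrderBot.bddBelow _) v

lemma exists_dist_eq_translationLength {V : Type*} [Nonempty V] (G : SimpleGraph V)
    (f : V → V) : ∃ v, G.dist v (f v) = translationLength G f :=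
  ciInf_mem _

lemma distToSet_le_dist {V : Type*} {G : SimpleGraph V} {x v : V} {A : Set V} (hv : v ∈ A) :
    distToSet G x A ≤ G.dist x v :=
  Nat.sInf_le ⟨v, hv, rfl⟩

lemma exists_dist_eq_distToSet {V : Type*} (G : SimpleGraph V) (x : V) {A : Set V}
    (hA : A.Nonempty) : ∃ z ∈ A, G.dist x z = distToSet G x A :=
  Nat.sInf_mem (hA.image _)

namespace SimpleGraph

variable {V V' : Type*} {G : SimpleGraph V} {G' : SimpleGraph V'} {u v w a b x z : V}

lemma Iso.dist_apply (f : G ≃g G') (u v : V) : G'.dist (f u) (f v) = G.dist u v := by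
  simp only [dist_eq_sInf]
  congr 1
  ext n
  constructor
  · rintro ⟨p, rfl⟩
    exact ⟨(p.map f.symm.toHom).copy (by simp) (by simp), by simp⟩
  · rintro ⟨p, rfl⟩
    exact ⟨p.map f.toHom, by simp⟩

/-- In a tree: the second vertex of the geodesic from `v` to `w`. Arbitrary when `v = w`. -/
noncomputable def towards (G : SimpleGraph V) (v w : V) : V :=
  @Classical.epsilon V ⟨v⟩ fun a => G.Adj v a ∧ G.dist a w < G.dist v w

lemma Reachable.towards_spec (h : G.Reachable v w) (hvw : v ≠ w) :
    G.Adj v (G.towards v w) ∧ G.dist (G.towards v w) w + 1 = G.dist v w := by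
  obtain ⟨p, hp⟩ := h.exists_walk_length_eq_dist
  have hnil : ¬ p.Nil := Walk.not_nil_of_ne hvw
  have hex : ∃ a, G.Adj v a ∧ G.dist a w < G.dist v w := by
    refine ⟨p.snd, p.adj_snd hnil, ?_⟩
    have := dist_le p.tail
    have := p.length_tail_add_one hnil
    omega
  obtain ⟨hadj, hlt⟩ : G.Adj v (G.towards v w) ∧ G.dist (G.towards v w) w < G.dist v w :=
    Classical.epsilon_spec hex
  refine ⟨hadj, ?_⟩
  have := hadj.reachable.dist_triangle_left w
  rw [dist_eq_one_iff_adj.mpr hadj] at this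
  exact le_antisymm (by omega) (by omega)

lemma IsTree.eq_of_adj_of_dist_lt (hG : G.IsTree) (ha : G.Adj v a) (hb : G.Adj v b)
    (ha' : G.dist a w < G.dist v w) (hb' : G.dist b w < G.dist v w) : a = b := by
  obtain ⟨q, hq, -⟩ := hG.connected.exists_path_of_dist w v
  suffices ∀ c, G.Adj v c → G.dist c w < G.dist v w → c = q.penultimate by
    rw [this a ha ha', this b hb hb']
  intro c hc hc'
  classical
  obtain ⟨p, hp, hpl⟩ := hG.connected.exists_path_of_dist w c
  refine hG.isAcyclic.eq_penultimate_of_adj_end hq hc ?_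
  refine hG.isAcyclic.mem_support_of_ne_mem_support_of_adj_of_isPath hq hp hc fun hv => ?_
  have := dist_le (p.takeUntil v hv)
  have := p.length_takeUntil_le_length hv
  rw [dist_comm (u := c), dist_comm (u := v)] at hc'
  omega

lemma IsTree.eq_towards (hG : G.IsTree) (hadj : G.Adj v a) (hlt : G.dist a w < G.dist v w) :
    a = G.towards v w := by
  have hvw : v ≠ w := by rintro rfl; simp at hlt
  obtain ⟨hadj', hdist⟩ := (hG.connected v w).towards_spec hvw
  exact hG.eq_of_adj_of_dist_lt hadj hadj' hlt (by omega)

lemma IsTree.towards_eq_of_dist_eq_add (hG : G.IsTree) (h : G.dist u w = G.dist u v + G.dist v w)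
    (huv : u ≠ v) : G.towards u w = G.towards u v := by
  obtain ⟨hadj, hdist⟩ := (hG.connected u v).towards_spec huv
  have := hG.connected.dist_triangle (u := G.towards u v) (v := v) (w := w)
  exact (hG.eq_towards hadj (by omega)).symm

/- Walk from `v` to `w`: the first step `b` moves away from `u`, and seen from `b` the direction
of `u` is `v`, which is not the direction of `w`. -/
lemma IsTree.dist_eq_add_of_towards_ne (hG : G.IsTree) (h : G.towards v u ≠ G.towards v w) :
    G.dist u w = G.dist u v + G.dist v w := by
  induction hn : G.dist v w using Nat.strong_induction_on generalizing v with
  | _ n ih =>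
  by_cases hvw : v = w
  · subst hvw
    simp [← hn]
  obtain ⟨hb, hbw⟩ := (hG.connected v w).towards_spec hvw
  set b := G.towards v w
  have hub : G.dist u b = G.dist u v + 1 := by
    refine (hG.dist_eq_dist_add_one_of_adj u hb).resolve_left fun hvb => h ?_
    exact (hG.eq_towards hb (by rw [dist_comm, dist_comm (u := v)]; omega)).symm
  by_cases hbw : b = w
  · rw [← hbw, hub, ← hn, ← hbw, dist_eq_one_iff_adj.mpr hb]
  obtain ⟨hc, hcw⟩ := (hG.connected b w).towards_spec hbw
  have hbu : v = G.towards b u :=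
    hG.eq_towards hb.symm (by rw [dist_comm, dist_comm (u := b)]; omega)
  have hbub : G.towards b u ≠ G.towards b w := by
    rw [← hbu]
    intro hv
    rw [← hv] at hcw
    omega
  rw [ih (G.dist b w) (by omega) hbub rfl, hub]
  omega

lemma IsTree.map_towards (hG : G.IsTree) (f : G ≃g G') (hvw : v ≠ w) :
    f (G.towards v w) = G'.towards (f v) (f w) := by
  obtain ⟨hadj, hdist⟩ := (hG.connected v w).towards_spec hvw
  refine (f.isTree_iff.mp hG).eq_towards (f.map_adj_iff.mpr hadj) ?_
  rw [f.dist_apply, f.dist_apply]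
  omega

lemma IsTree.dist_pow_apply_of_towards_ne (hG : G.IsTree) (g : G ≃g G) (hz : z ≠ g z)
    (hstraight : G.towards (g z) z ≠ g (G.towards z (g z))) (n : ℕ) :
    G.dist z ((g ^ (n + 1)) z) = (n + 1) * G.dist z (g z) ∧
      G.towards z ((g ^ (n + 1)) z) = G.towards z (g z) ∧
      G.towards ((g ^ (n + 1)) z) z = (g ^ n) (G.towards (g z) z) := by
  have hpos : 0 < G.dist z (g z) := hG.connected.pos_dist_of_ne hz
  induction n with
  | zero => simp
  | succ n ih =>
    obtain ⟨hd, hfirst, hlast⟩ := ih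
    set y := (g ^ (n + 1)) z
    have hy : (g ^ (n + 1 + 1)) z = (g ^ (n + 1)) (g z) := by rw [pow_succ, RelIso.mul_apply]
    have hzy : z ≠ y := fun h => by rw [← h, dist_self] at hd; nlinarith
    have hyy : y ≠ (g ^ (n + 1 + 1)) z := by rw [hy]; exact (g ^ (n + 1)).injective.ne hz
    have hd' : G.dist z ((g ^ (n + 1 + 1)) z) = G.dist z y + G.dist y ((g ^ (n + 1 + 1)) z) := by
      refine hG.dist_eq_add_of_towards_ne ?_
      rw [hlast, hy, ← hG.map_towards _ hz, pow_succ, RelIso.mul_apply]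
      exact (g ^ n).injective.ne hstraight
    refine ⟨?_, ?_, ?_⟩
    · rw [hd', hd, hy, Iso.dist_apply]
      ring
    · rw [hG.towards_eq_of_dist_eq_add hd' hzy, hfirst]
    · rw [hG.towards_eq_of_dist_eq_add (by rw [dist_comm, hd', add_comm, dist_comm,
        dist_comm (u := y)]) hyy.symm, hy, ← hG.map_towards _ hz.symm]

/- If `[z, g z]` backtracked at `g z`, its second vertex `a` would either be `g z`, so that `g`
swaps `z` and `a`, or be displaced by `d(z, g z) - 2` only. -/
lemma IsTree.towards_ne_of_dist_eq_translationLength (hG : G.IsTree) (g : G ≃g G)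
    (hzg : z ≠ g z) (hninv : ∀ u v : V, G.Adj u v → ¬(g u = v ∧ g v = u))
    (hz : G.dist z (g z) = translationLength G g) :
    G.towards (g z) z ≠ g (G.towards z (g z)) := by
  intro hback
  obtain ⟨ha, hagz⟩ := (hG.connected z (g z)).towards_spec hzg
  set a := G.towards z (g z)
  have haz : G.dist a z = 1 := dist_eq_one_iff_adj.mpr ha.symm
  by_cases ha_eq : a = g z
  · have hza : z = G.towards a z := hG.eq_towards ha.symm (by simp [haz])
    rw [← ha_eq, ← hza] at hback
    exact hninv z a ha ⟨ha_eq.symm, hback.symm⟩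
  · have hgz : G.towards (g z) z = G.towards (g z) a :=
      hG.towards_eq_of_dist_eq_add (by rw [dist_comm, haz, dist_comm (u := g z)]; omega)
        (Ne.symm ha_eq)
    obtain ⟨-, hga⟩ := (hG.connected (g z) a).towards_spec (Ne.symm ha_eq)
    rw [← hgz, hback, dist_comm (u := g z)] at hga
    have := translationLength_le_dist G g a
    rw [dist_comm] at this
    omega

/- Otherwise `towards z x` would be displaced by at most `λ(g)`, hence lie on the axis, closer to
`x` than `z`. -/
lemma IsTree.towards_ne_of_forall_dist_le (hG : G.IsTree) (g : G ≃g G) (hzg : z ≠ g z)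
    (hz : G.dist z (g z) = translationLength G g)
    (hnear : ∀ v, G.dist v (g v) = translationLength G g → G.dist x z ≤ G.dist x v)
    (hxz : x ≠ z) :
    G.towards z x ≠ G.towards z (g z) ∧ g (G.towards z x) ≠ G.towards (g z) z := by
  obtain ⟨hb, hbx⟩ := (hG.connected z x).towards_spec hxz.symm
  set b := G.towards z x
  have hzb : G.dist z b = 1 := dist_eq_one_iff_adj.mpr hb
  have hfar : translationLength G g < G.dist b (g b) := by
    refine (translationLength_le_dist G g b).lt_of_ne fun h => ?_
    have := hnear b h.symm
    rw [dist_comm (u := x), dist_comm (u := x)] at this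
    omega
  constructor
  · intro h
    obtain ⟨-, hbg⟩ := (hG.connected z (g z)).towards_spec hzg
    rw [← h] at hbg
    have := hG.connected.dist_triangle (u := b) (v := g z) (w := g b)
    rw [g.dist_apply] at this
    omega
  · intro h
    obtain ⟨-, hgz⟩ := (hG.connected (g z) z).towards_spec hzg.symm
    rw [← h, dist_comm (u := g z)] at hgz
    have := hG.connected.dist_triangle (u := b) (v := z) (w := g b)
    rw [dist_comm (u := b) (v := z), dist_comm (u := z) (v := g b)] at this
    omega

lemma IsTree.dist_pow_apply_eq_of_towards_ne (hG : G.IsTree) (g : G ≃g G) (hzg : z ≠ g z)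
    (hstraight : G.towards (g z) z ≠ g (G.towards z (g z))) (hxz : x ≠ z)
    (hfirst : G.towards z x ≠ G.towards z (g z)) (hlast : g (G.towards z x) ≠ G.towards (g z) z)
    (n : ℕ) :
    G.dist x ((g ^ (n + 1)) x) = (n + 1) * G.dist z (g z) + 2 * G.dist x z := by
  obtain ⟨hd, hzfirst, hzlast⟩ := hG.dist_pow_apply_of_towards_ne g hzg hstraight n
  set y := (g ^ (n + 1)) z
  have hzy : z ≠ y := fun h => by
    rw [← h, dist_self] at hd
    nlinarith [hG.connected.pos_dist_of_ne hzg]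
  have hxy : G.dist x y = G.dist x z + G.dist z y :=
    hG.dist_eq_add_of_towards_ne (by rwa [hzfirst])
  have hyx : G.towards y x = G.towards y z :=
    hG.towards_eq_of_dist_eq_add (by rw [dist_comm, hxy, add_comm, dist_comm, dist_comm (u := z)])
      hzy.symm
  have hxgx : G.dist x ((g ^ (n + 1)) x) = G.dist x y + G.dist y ((g ^ (n + 1)) x) := by
    refine hG.dist_eq_add_of_towards_ne ?_
    rw [hyx, hzlast, ← hG.map_towards _ hxz.symm, pow_succ, RelIso.mul_apply]
    exact (g ^ n).injective.ne (Ne.symm hlast)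
  rw [hxgx, hxy, hd, Iso.dist_apply, dist_comm (u := z) (v := x)]
  ring

end SimpleGraph

/-- Identity (3.3) of the paper, extended to powers: if `g` is a hyperbolic automorphism
of a tree (no fixed vertex, no inversion), with translation length `λ(g)` and axis
`A_g = {v : d(v, g·v) = λ(g)}`, then `d(x, gⁿ·x) = n·λ(g) + 2·d(x, A_g)` for every
vertex `x` and every `n ≥ 1`. -/
theorem stmt_10 {V : Type*} (G : SimpleGraph V) (hG : G.IsTree)
    (g : G ≃g G)
    (hnofix : ∀ v : V, g v ≠ v)
    (hninv : ∀ u v : V, G.Adj u v → ¬(g u = v ∧ g v = u)) :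
    ∀ x : V, ∀ n : ℕ, 1 ≤ n →
      G.dist x ((g ^ n) x) =
        n * translationLength G g +
          2 * distToSet G x {v : V | G.dist v (g v) = translationLength G g} := by
  intro x n hn
  obtain ⟨m, rfl⟩ : ∃ m, n = m + 1 := ⟨n - 1, by omega⟩
  have : Nonempty V := ⟨x⟩
  obtain ⟨z, hz : G.dist z (g z) = translationLength G g, hxz⟩ :=
    exists_dist_eq_distToSet G x (A := {v | G.dist v (g v) = translationLength G g})
      (exists_dist_eq_translationLength G g)
  have hzg : z ≠ g z := (hnofix z).symm
  have hstraight := hG.towards_ne_of_dist_eq_translationLength g hzg hninv hz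
  rw [← hxz, ← hz]
  by_cases hx : x = z
  · subst hx
    simp [(hG.dist_pow_apply_of_towards_ne g hzg hstraight m).1]
  · have hnear v (hv : G.dist v (g v) = translationLength G g) : G.dist x z ≤ G.dist x v :=
      hxz ▸ distToSet_le_dist hv
    obtain ⟨hfirst, hlast⟩ := hG.towards_ne_of_forall_dist_le g hzg hz hnear hx
    exact hG.dist_pow_apply_eq_of_towards_ne g hzg hstraight hx hfirst hlast m
end

section
/- Let Y be a finite connected simple graph with a edges and s vertices, and suppose n := a − s + 1 satisfies n ≥ 2. Then the average degree v := 2a/s satisfies v > 2, and a = (n − 1)/(1 − 2/v). Consequently, if Y' is another finite connected simple graph with a' edges and s' vertices such that a' − s' + 1 = n and whose average degree v' satisfies v' ≥ v, then a' ≤ a. -/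
/-!
With `n - 1 = a - s`, the average degree is `2a/s = 2 + 2(n - 1)/s`. Hence it exceeds `2`,
`1 - 2/v = (a - s)/a = (n - 1)/a`, and for fixed `n` a larger average degree forces fewer
vertices, hence fewer edges `a = s + n - 1`.
-/

section
variable {K : Type*} [Field K] [LinearOrder K] [IsStrictOrderedRing K] {a s a' s' : K}

theorem two_lt_two_mul_div_of_lt (hs : 0 < s) (h : s < a) : 2 < 2 * a / s := by
  rw [lt_div_iff₀ hs]; linarith

theorem eq_sub_div_one_sub_two_div_two_mul_div (hs : 0 < s) (h : s < a) :
    a = (a - s) / (1 - 2 / (2 * a / s)) := by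
  have ha : a ≠ 0 := (hs.trans h).ne'
  have hd : a - s ≠ 0 := sub_ne_zero.mpr h.ne'
  have : 1 - 2 / (2 * a / s) = (a - s) / a := by field_simp
  rw [this, div_div_cancel₀ hd]

theorem le_of_two_mul_div_le_of_sub_eq (hs : 0 < s) (hs' : 0 < s') (h : s < a)
    (hsub : a' - s' = a - s) (hle : 2 * a / s ≤ 2 * a' / s') : a' ≤ a := by
  rw [div_le_div_iff₀ hs hs'] at hle
  have : s' ≤ s := by nlinarith
  linarith
end

theorem cast_sub_eq_of_intCast_sub_add_one_eq {a s n : ℕ} (h : (a : ℤ) - s + 1 = n) :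
    (a : ℝ) - s = n - 1 := by
  rw [eq_sub_iff_add_eq]; exact_mod_cast h

/-- **Lemme 5.6**: for a finite connected simple graph `Y` with `a` edges, `s` vertices
and cycle rank `n = a − s + 1 ≥ 2`, the average degree `v = 2a/s` satisfies `v > 2`
and `a = (n − 1)/(1 − 2/v)`; consequently among finite connected graphs of cycle
rank `n`, the number of edges is a decreasing function of the average degree. -/
theorem stmt_13 {V : Type*} [Finite V] (Y : SimpleGraph V) (hc : Y.Connected)
    (n : ℕ) (hn : 2 ≤ n)
    (ha : (Nat.card Y.edgeSet : ℤ) - (Nat.card V : ℤ) + 1 = (n : ℤ)) :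
    2 < 2 * (Nat.card Y.edgeSet : ℝ) / (Nat.card V : ℝ) ∧
    (Nat.card Y.edgeSet : ℝ) =
      ((n : ℝ) - 1) / (1 - 2 / (2 * (Nat.card Y.edgeSet : ℝ) / (Nat.card V : ℝ))) ∧
    ∀ (V' : Type) [Finite V'] (Y' : SimpleGraph V'), Y'.Connected →
      (Nat.card Y'.edgeSet : ℤ) - (Nat.card V' : ℤ) + 1 = (n : ℤ) →
      2 * (Nat.card Y.edgeSet : ℝ) / (Nat.card V : ℝ) ≤
        2 * (Nat.card Y'.edgeSet : ℝ) / (Nat.card V' : ℝ) →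
      Nat.card Y'.edgeSet ≤ Nat.card Y.edgeSet := by
  have hs : (0 : ℝ) < Nat.card V := by
    have := hc.nonempty
    exact_mod_cast Nat.card_pos
  have hsub := cast_sub_eq_of_intCast_sub_add_one_eq ha
  have hlt : (Nat.card V : ℝ) < Nat.card Y.edgeSet := by
    have : (2 : ℝ) ≤ n := by exact_mod_cast hn
    linarith
  refine ⟨two_lt_two_mul_div_of_lt hs hlt, ?_, ?_⟩
  · rw [← hsub]
    exact eq_sub_div_one_sub_two_div_two_mul_div hs hlt
  · intro V' _ Y' hc' ha' hle
    have hs' : (0 : ℝ) < Nat.card V' := by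
      have := hc'.nonempty
      exact_mod_cast Nat.card_pos
    exact_mod_cast le_of_two_mul_div_le_of_sub_eq hs hs' hlt
      ((cast_sub_eq_of_intCast_sub_add_one_eq ha').trans hsub.symm) hle
end
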